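/- arXiv:2510.04926 — 6 statements merged into one kernel-verified Lean document; each statement's English description precedes it below -/
import Mathlib

section
/- Assume Assumptions 1 and 2 and fix β ∈ (0,K). Let (λ*,γ*) be a minimizer of H over Δ, let Γ*_β(x,s) := {k ∈ [K] : p_k(x,s) ≥ λ* + γ*_{k,s}/π_s}, and set β*_k := ℙ(k ∈ Γ*_β(X,S)) for each k ∈ [K]. Then for every k ∈ [K] and s ∈ 𝒮, F̄_{k,s}(λ* + γ*_{k,s}/π_s) = β*_k, i.e. λ* + γ*_{k,s}/π_s = F̄_{k,s}⁻¹(β*_k); in particular the oracle admits the parametrization Γ*_β(x,s) = {k ∈ [K] : p_k(x,s) ≥ F̄_{k,s}⁻¹(β*_k)}. -/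
open MeasureTheory Set Filter
open Topology

noncomputable section

section Defs

variable {𝒳 𝒮 : Type*} [MeasurableSpace 𝒳] [MeasurableSpace 𝒮] {K : ℕ}

/-- `π_s := ℙ(S = s)`. -/
def probS (μ : Measure (𝒳 × 𝒮 × Fin K)) (s : 𝒮) : ℝ :=
  (μ {ω | ω.2.1 = s}).toReal

/-- `ℙ(A | S = s) := ℙ(A ∩ {S = s}) / π_s`. -/
def condProb (μ : Measure (𝒳 × 𝒮 × Fin K)) (A : Set (𝒳 × 𝒮 × Fin K)) (s : 𝒮) : ℝ :=
  (μ (A ∩ {ω | ω.2.1 = s})).toReal / probS μ s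

/-- Conditional expectation `E[f(X,S,Y) | S = s]`. -/
def condMean (μ : Measure (𝒳 × 𝒮 × Fin K)) (f : 𝒳 × 𝒮 × Fin K → ℝ) (s : 𝒮) : ℝ :=
  (∫ ω in {ω : 𝒳 × 𝒮 × Fin K | ω.2.1 = s}, f ω ∂μ) / probS μ s

/-- The event `{k ∈ Γ(X,S)}`. -/
def memEvent (Γ : 𝒳 → 𝒮 → Set (Fin K)) (k : Fin K) : Set (𝒳 × 𝒮 × Fin K) :=
  {ω | k ∈ Γ ω.1 ω.2.1}

/-- A set-valued classifier: each membership set is measurable. -/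
def IsClassifier (Γ : 𝒳 → 𝒮 → Set (Fin K)) : Prop :=
  ∀ k : Fin K, MeasurableSet {q : 𝒳 × 𝒮 | k ∈ Γ q.1 q.2}

/-- Risk `R(Γ) := ℙ(Y ∉ Γ(X,S))`. -/
def risk (μ : Measure (𝒳 × 𝒮 × Fin K)) (Γ : 𝒳 → 𝒮 → Set (Fin K)) : ℝ :=
  (μ {ω | ω.2.2 ∉ Γ ω.1 ω.2.1}).toReal

/-- Expected size `𝒯(Γ) := E[|Γ(X,S)|]`. -/
def expSize (μ : Measure (𝒳 × 𝒮 × Fin K)) (Γ : 𝒳 → 𝒮 → Set (Fin K)) : ℝ :=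
  ∫ ω, ((Γ ω.1 ω.2.1).ncard : ℝ) ∂μ

/-- Demographic parity: `ℙ(k ∈ Γ(X,S) | S = s) = ℙ(k ∈ Γ(X,S))` for all `k, s`. -/
def DPfair (μ : Measure (𝒳 × 𝒮 × Fin K)) (Γ : 𝒳 → 𝒮 → Set (Fin K)) : Prop :=
  ∀ (k : Fin K) (s : 𝒮), condProb μ (memEvent Γ k) s = (μ (memEvent Γ k)).toReal

/-- Unfairness measure `𝒰(Γ)`. -/
def unfairness (μ : Measure (𝒳 × 𝒮 × Fin K)) (Γ : 𝒳 → 𝒮 → Set (Fin K)) : ℝ :=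
  ⨆ k : Fin K, ⨆ s : 𝒮, ⨆ s' : 𝒮,
    |condProb μ (memEvent Γ k) s - condProb μ (memEvent Γ k) s'|

/-- Conditional cdf `F_{k,s}(t) := ℙ(p_k(X,S) ≤ t | S = s)`. -/
def Fks (μ : Measure (𝒳 × 𝒮 × Fin K)) (p : Fin K → 𝒳 → 𝒮 → ℝ) (k : Fin K) (s : 𝒮) (t : ℝ) : ℝ :=
  condProb μ {ω | p k ω.1 ω.2.1 ≤ t} s

/-- cdf `F_k(t) := ℙ(p_k(X,S) ≤ t)`. -/
def Fk (μ : Measure (𝒳 × 𝒮 × Fin K)) (p : Fin K → 𝒳 → 𝒮 → ℝ) (k : Fin K) (t : ℝ) : ℝ :=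
  (μ {ω | p k ω.1 ω.2.1 ≤ t}).toReal

/-- `G(t) := Σ_k (1 - F_k(t))`. -/
def Gfun (μ : Measure (𝒳 × 𝒮 × Fin K)) (p : Fin K → 𝒳 → 𝒮 → ℝ) (t : ℝ) : ℝ :=
  ∑ k : Fin K, (1 - Fk μ p k t)

/-- Assumption 1 (continuity of all the conditional cdfs `F_{k,s}`). -/
def Assumption1 (μ : Measure (𝒳 × 𝒮 × Fin K)) (p : Fin K → 𝒳 → 𝒮 → ℝ) : Prop :=
  ∀ (k : Fin K) (s : 𝒮), Continuous (fun t => Fks μ p k s t)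

/-- Thresholding (oracle) classifier `{k : p_k(x,s) ≥ λ + γ_{k,s}/π_s}`. -/
def oracle (μ : Measure (𝒳 × 𝒮 × Fin K)) (p : Fin K → 𝒳 → 𝒮 → ℝ)
    (lam : ℝ) (γ : Fin K → 𝒮 → ℝ) : 𝒳 → 𝒮 → Set (Fin K) :=
  fun x s => {k | lam + γ k s / probS μ s ≤ p k x s}

/-- The objective `H(λ,γ)`. -/
def Hfun [Fintype 𝒮] (μ : Measure (𝒳 × 𝒮 × Fin K)) (p : Fin K → 𝒳 → 𝒮 → ℝ) (β : ℝ)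
    (lam : ℝ) (γ : Fin K → 𝒮 → ℝ) : ℝ :=
  (∑ k : Fin K, ∑ s : 𝒮,
      condMean μ (fun ω => max (probS μ s * (p k ω.1 ω.2.1 - lam) - γ k s) 0) s) + lam * β

/-- Lagrangian risk `R_{λ,γ}(Γ)`. -/
def lagRisk [Fintype 𝒮] (μ : Measure (𝒳 × 𝒮 × Fin K)) (β lam : ℝ) (γ : Fin K → 𝒮 → ℝ)
    (Γ : 𝒳 → 𝒮 → Set (Fin K)) : ℝ :=
  risk μ Γ + lam * (expSize μ Γ - β) +
    ∑ k : Fin K, ∑ s : 𝒮, γ k s * condProb μ (memEvent Γ k) s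

end Defs

/-- Generalized inverse `h⁻¹(u) := inf {t | h t ≤ u}` of a nonincreasing function. -/
def ginv (h : ℝ → ℝ) (u : ℝ) : ℝ := sInf {t | h t ≤ u}

/-- The constraint set `Δ`. -/
def Δset (K : ℕ) (𝒮 : Type*) [Fintype 𝒮] : Set (ℝ × (Fin K → 𝒮 → ℝ)) :=
  {q | 0 ≤ q.1 ∧ ∀ k : Fin K, ∑ s : 𝒮, q.2 k s = 0}

/-- Assumption 2 (positive density): the conditional law of `p_k(X,S)` given `S = s`
has a density w.r.t. Lebesgue measure which is continuous and strictly positive on `[0,1]`. -/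
def Assumption2 {𝒳 𝒮 : Type*} [MeasurableSpace 𝒳] [MeasurableSpace 𝒮] {K : ℕ}
    (μ : Measure (𝒳 × 𝒮 × Fin K)) (p : Fin K → 𝒳 → 𝒮 → ℝ) : Prop :=
  ∀ (k : Fin K) (s : 𝒮), ∃ d : ℝ → ℝ,
    ContinuousOn d (Icc 0 1) ∧ (∀ u ∈ Icc (0:ℝ) 1, 0 < d u) ∧
    (∀ u, u ∉ Icc (0:ℝ) 1 → d u = 0) ∧
    ∀ t : ℝ, Fks μ p k s t = ∫ u in Iic t, d u


section Aux
set_option linter.unusedSectionVars false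

variable {𝒳 𝒮 : Type*} [MeasurableSpace 𝒳] [MeasurableSpace 𝒮] [MeasurableSingletonClass 𝒮]
    [Fintype 𝒮] {K : ℕ}
    (μ : Measure (𝒳 × 𝒮 × Fin K)) (p : Fin K → 𝒳 → 𝒮 → ℝ)

lemma measProj : Measurable (fun ω : 𝒳 × 𝒮 × Fin K => (ω.1, ω.2.1)) :=
  measurable_fst.prodMk (measurable_snd.fst)

lemma measS (s : 𝒮) : MeasurableSet {ω : 𝒳 × 𝒮 × Fin K | ω.2.1 = s} :=
  measurable_snd.fst (measurableSet_singleton s)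

lemma measP (hpmeas : ∀ k, Measurable fun q : 𝒳 × 𝒮 => p k q.1 q.2) (k : Fin K) :
    Measurable (fun ω : 𝒳 × 𝒮 × Fin K => p k ω.1 ω.2.1) :=
  (hpmeas k).comp measProj

lemma measLe (hpmeas : ∀ k, Measurable fun q : 𝒳 × 𝒮 => p k q.1 q.2) (k : Fin K) (t : ℝ) :
    MeasurableSet {ω : 𝒳 × 𝒮 × Fin K | p k ω.1 ω.2.1 ≤ t} :=
  measP p hpmeas k measurableSet_Iic

lemma measGe (hpmeas : ∀ k, Measurable fun q : 𝒳 × 𝒮 => p k q.1 q.2) (k : Fin K) (t : ℝ) :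
    MeasurableSet {ω : 𝒳 × 𝒮 × Fin K | t ≤ p k ω.1 ω.2.1} :=
  measP p hpmeas k measurableSet_Ici

variable [IsProbabilityMeasure μ]

lemma probS_eq (s : 𝒮) : (μ {ω : 𝒳 × 𝒮 × Fin K | ω.2.1 = s}).toReal = probS μ s := rfl

lemma sum_probS : ∑ s : 𝒮, probS μ s = 1 := by
  classical
  have hdisj : Pairwise (Function.onFun Disjoint (fun s : 𝒮 => {ω : 𝒳 × 𝒮 × Fin K | ω.2.1 = s})) := by
    intro a b hab
    simp only [Function.onFun, Set.disjoint_left]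
    rintro ω (h1 : ω.2.1 = a) (h2 : ω.2.1 = b)
    exact hab (h1 ▸ h2 ▸ rfl)
  have hU : (⋃ s : 𝒮, {ω : 𝒳 × 𝒮 × Fin K | ω.2.1 = s}) = univ := by
    ext ω; simp
  have := measure_iUnion (μ := μ) hdisj (fun s => measS s)
  rw [hU, measure_univ, tsum_fintype] at this
  have h2 : (∑ s : 𝒮, μ {ω : 𝒳 × 𝒮 × Fin K | ω.2.1 = s}).toReal = 1 := by
    rw [← this]; simp
  rw [ENNReal.toReal_sum (fun s _ => measure_ne_top μ _)] at h2
  exact h2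

lemma total_prob (A : Set (𝒳 × 𝒮 × Fin K)) (hA : MeasurableSet A) :
    (μ A).toReal = ∑ s : 𝒮, (μ (A ∩ {ω | ω.2.1 = s})).toReal := by
  classical
  have hdisj : Pairwise (Function.onFun Disjoint
      (fun s : 𝒮 => A ∩ {ω : 𝒳 × 𝒮 × Fin K | ω.2.1 = s})) := by
    intro a b hab
    simp only [Function.onFun, Set.disjoint_left]
    rintro ω ⟨_, (h1 : ω.2.1 = a)⟩ ⟨_, (h2 : ω.2.1 = b)⟩
    exact hab (h1 ▸ h2 ▸ rfl)
  have hU : (⋃ s : 𝒮, A ∩ {ω : 𝒳 × 𝒮 × Fin K | ω.2.1 = s}) = A := by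
    ext ω; simp
  have := measure_iUnion (μ := μ) hdisj (fun s => hA.inter (measS s))
  rw [hU, tsum_fintype] at this
  rw [this, ENNReal.toReal_sum (fun s _ => measure_ne_top μ _)]


-- Fks basic facts
lemma Fks_def (k : Fin K) (s : 𝒮) (t : ℝ) :
    Fks μ p k s t = (μ ({ω | p k ω.1 ω.2.1 ≤ t} ∩ {ω | ω.2.1 = s})).toReal / probS μ s := rfl

lemma Fks_nonneg (k : Fin K) (s : 𝒮) (t : ℝ) (hπ : 0 < probS μ s) : 0 ≤ Fks μ p k s t :=
  div_nonneg ENNReal.toReal_nonneg hπ.le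

lemma Fks_mono (k : Fin K) (s : 𝒮) (hπ : 0 < probS μ s) {t t' : ℝ} (h : t ≤ t') :
    Fks μ p k s t ≤ Fks μ p k s t' := by
  rw [Fks_def, Fks_def]
  apply div_le_div_of_nonneg_right ?_ hπ.le
  exact ENNReal.toReal_mono (measure_ne_top μ _)
    (measure_mono (inter_subset_inter_left _ (fun ω (h' : p k ω.1 ω.2.1 ≤ t) => h'.trans h)))

lemma Fks_le_one (k : Fin K) (s : 𝒮) (t : ℝ) (hπ : 0 < probS μ s) : Fks μ p k s t ≤ 1 := by
  rw [Fks_def, div_le_one hπ]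
  have : (μ ({ω | p k ω.1 ω.2.1 ≤ t} ∩ {ω | ω.2.1 = s})) ≤ μ {ω : 𝒳 × 𝒮 × Fin K | ω.2.1 = s} :=
    measure_mono inter_subset_right
  exact ENNReal.toReal_mono (measure_ne_top μ _) this

lemma Fks_one (hp01 : ∀ k x s, p k x s ∈ Icc (0:ℝ) 1) (k : Fin K) (s : 𝒮)
    (hπ : 0 < probS μ s) {t : ℝ} (ht : 1 ≤ t) : Fks μ p k s t = 1 := by
  rw [Fks_def]
  have : {ω : 𝒳 × 𝒮 × Fin K | p k ω.1 ω.2.1 ≤ t} ∩ {ω | ω.2.1 = s} = {ω | ω.2.1 = s} := by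
    apply inter_eq_self_of_subset_right
    intro ω _
    exact le_trans (hp01 k ω.1 ω.2.1).2 ht
  rw [this, probS_eq, div_self hπ.ne']


-- measure of strict-below set equals Fks * probS (continuity ⇒ no atoms)
lemma meas_lt (hpmeas : ∀ k, Measurable fun q : 𝒳 × 𝒮 => p k q.1 q.2)
    (hA1 : Assumption1 μ p) (k : Fin K) (s : 𝒮) (hπ : 0 < probS μ s) (t : ℝ) :
    (μ ({ω | p k ω.1 ω.2.1 < t} ∩ {ω | ω.2.1 = s})).toReal = Fks μ p k s t * probS μ s := by
  set E : ℕ → Set (𝒳 × 𝒮 × Fin K) :=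
    fun n => {ω | p k ω.1 ω.2.1 ≤ t - 1/(n+1)} ∩ {ω | ω.2.1 = s} with hE
  have hmono : Monotone E := by
    intro m n hmn
    apply inter_subset_inter_left
    intro ω (h : p k ω.1 ω.2.1 ≤ t - 1/(m+1))
    refine h.trans (by
      have : (1:ℝ)/(n+1) ≤ 1/(m+1) := by
        apply one_div_le_one_div_of_le (by positivity)
        exact_mod_cast add_le_add_left (Nat.cast_le.mpr hmn) 1
      linarith)
  have hU : (⋃ n, E n) = {ω | p k ω.1 ω.2.1 < t} ∩ {ω | ω.2.1 = s} := by
    ext ω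
    simp only [hE, mem_iUnion, mem_inter_iff, mem_setOf_eq]
    constructor
    · rintro ⟨n, h1, h2⟩
      have hpos : (0:ℝ) < 1/((n:ℝ)+1) := by positivity
      exact ⟨by linarith, h2⟩
    · rintro ⟨h1, h2⟩
      obtain ⟨n, hn⟩ := exists_nat_one_div_lt (sub_pos.mpr h1)
      exact ⟨n, by push_cast at hn ⊢; linarith, h2⟩
  have htend : Tendsto (fun n => μ (E n)) atTop (𝓝 (μ ({ω | p k ω.1 ω.2.1 < t} ∩ {ω | ω.2.1 = s}))) := by
    rw [← hU]
    exact tendsto_measure_iUnion_atTop hmono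
  have htoReal : Tendsto (fun n => (μ (E n)).toReal) atTop
      (𝓝 ((μ ({ω | p k ω.1 ω.2.1 < t} ∩ {ω | ω.2.1 = s})).toReal)) :=
    (ENNReal.tendsto_toReal (measure_ne_top μ _)).comp htend
  have hval : ∀ n, (μ (E n)).toReal = Fks μ p k s (t - 1/(n+1)) * probS μ s := by
    intro n
    rw [Fks_def, div_mul_cancel₀ _ hπ.ne']
  have hval' : Tendsto (fun n : ℕ => Fks μ p k s (t - 1/(n+1)) * probS μ s) atTop
      (𝓝 (Fks μ p k s t * probS μ s)) := by
    apply Tendsto.mul_const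
    apply (hA1 k s).continuousAt.tendsto.comp
    have : Tendsto (fun n : ℕ => t - 1/((n:ℝ)+1)) atTop (𝓝 (t - 0)) := by
      apply Tendsto.const_sub
      exact tendsto_one_div_add_atTop_nhds_zero_nat
    simpa using this
  have := htoReal
  simp only [hval] at this
  exact (tendsto_nhds_unique this hval').symm ▸ rfl


lemma meas_ge (hpmeas : ∀ k, Measurable fun q : 𝒳 × 𝒮 => p k q.1 q.2)
    (hA1 : Assumption1 μ p) (k : Fin K) (s : 𝒮) (hπ : 0 < probS μ s) (t : ℝ) :
    (μ ({ω | t ≤ p k ω.1 ω.2.1} ∩ {ω | ω.2.1 = s})).toReal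
      = (1 - Fks μ p k s t) * probS μ s := by
  have hsplit : {ω : 𝒳 × 𝒮 × Fin K | ω.2.1 = s}
      = ({ω | p k ω.1 ω.2.1 < t} ∩ {ω | ω.2.1 = s}) ∪ ({ω | t ≤ p k ω.1 ω.2.1} ∩ {ω | ω.2.1 = s}) := by
    ext ω
    by_cases h : p k ω.1 ω.2.1 < t
    · simp [h]
    · simp [h, le_of_not_gt h]
  have hdisj : Disjoint ({ω : 𝒳 × 𝒮 × Fin K | p k ω.1 ω.2.1 < t} ∩ {ω | ω.2.1 = s})
      ({ω | t ≤ p k ω.1 ω.2.1} ∩ {ω | ω.2.1 = s}) := by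
    rw [Set.disjoint_left]
    rintro ω ⟨h1, _⟩ hmem
    have h2 : t ≤ p k ω.1 ω.2.1 := hmem.1
    exact absurd h2 (not_le.mpr h1)
  have hmeaslt : MeasurableSet ({ω : 𝒳 × 𝒮 × Fin K | p k ω.1 ω.2.1 < t} ∩ {ω | ω.2.1 = s}) :=
    (measP p hpmeas k measurableSet_Iio).inter (measS s)
  have hmeasge : MeasurableSet ({ω : 𝒳 × 𝒮 × Fin K | t ≤ p k ω.1 ω.2.1} ∩ {ω | ω.2.1 = s}) :=
    (measGe p hpmeas k t).inter (measS s)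
  have hadd : μ {ω : 𝒳 × 𝒮 × Fin K | ω.2.1 = s}
      = μ ({ω | p k ω.1 ω.2.1 < t} ∩ {ω | ω.2.1 = s}) + μ ({ω | t ≤ p k ω.1 ω.2.1} ∩ {ω | ω.2.1 = s}) :=
    (congrArg μ hsplit).trans (measure_union hdisj hmeasge)
  have := congrArg ENNReal.toReal hadd
  rw [ENNReal.toReal_add (measure_ne_top μ _) (measure_ne_top μ _), probS_eq,
    meas_lt μ p hpmeas hA1 k s hπ t] at this
  linarith

lemma oracle_inter (lam : ℝ) (γ : Fin K → 𝒮 → ℝ) (k : Fin K) (s : 𝒮) :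
    memEvent (oracle μ p lam γ) k ∩ {ω | ω.2.1 = s}
      = {ω | lam + γ k s / probS μ s ≤ p k ω.1 ω.2.1} ∩ {ω | ω.2.1 = s} := by
  ext ω
  simp only [memEvent, oracle, mem_inter_iff, mem_setOf_eq]
  constructor
  · rintro ⟨h1, h2⟩; subst h2; exact ⟨h1, rfl⟩
  · rintro ⟨h1, h2⟩; subst h2; exact ⟨h1, rfl⟩

lemma measMemEvent (hpmeas : ∀ k, Measurable fun q : 𝒳 × 𝒮 => p k q.1 q.2)
    (lam : ℝ) (γ : Fin K → 𝒮 → ℝ) (k : Fin K) :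
    MeasurableSet (memEvent (oracle μ p lam γ) k) := by
  have h0 : Measurable (fun s : 𝒮 => lam + γ k s / probS μ s) := measurable_of_countable _
  have h1 : Measurable (fun ω : 𝒳 × 𝒮 × Fin K => lam + γ k ω.2.1 / probS μ ω.2.1) :=
    h0.comp measurable_snd.fst
  have h2 : Measurable (fun ω : 𝒳 × 𝒮 × Fin K => p k ω.1 ω.2.1 - (lam + γ k ω.2.1 / probS μ ω.2.1)) :=
    (measP p hpmeas k).sub h1
  have : memEvent (oracle μ p lam γ) k
      = (fun ω : 𝒳 × 𝒮 × Fin K => p k ω.1 ω.2.1 - (lam + γ k ω.2.1 / probS μ ω.2.1)) ⁻¹' (Ici 0) := by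
    ext ω
    simp [memEvent, oracle, sub_nonneg]
  rw [this]
  exact h2 measurableSet_Ici

/-- β*ₖ as a sum over s. -/
lemma betastar (hpmeas : ∀ k, Measurable fun q : 𝒳 × 𝒮 => p k q.1 q.2)
    (hA1 : Assumption1 μ p) (hπ : ∀ s : 𝒮, 0 < probS μ s) (lam : ℝ) (γ : Fin K → 𝒮 → ℝ) (k : Fin K) :
    (μ (memEvent (oracle μ p lam γ) k)).toReal
      = ∑ s : 𝒮, (1 - Fks μ p k s (lam + γ k s / probS μ s)) * probS μ s := by
  rw [total_prob μ _ (measMemEvent μ p hpmeas lam γ k)]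
  apply Finset.sum_congr rfl
  intro s _
  rw [oracle_inter, meas_ge μ p hpmeas hA1 k s (hπ s)]


lemma integ_max (hpmeas : ∀ k, Measurable fun q : 𝒳 × 𝒮 => p k q.1 q.2)
    (hp01 : ∀ k x s, p k x s ∈ Icc (0:ℝ) 1) (k : Fin K) (c1 c2 c3 : ℝ) (S : Set (𝒳 × 𝒮 × Fin K)) :
    Integrable (fun ω : 𝒳 × 𝒮 × Fin K => max (c1 * (p k ω.1 ω.2.1 - c2) - c3) 0) (μ.restrict S) := by
  have hmeas : Measurable (fun ω : 𝒳 × 𝒮 × Fin K => max (c1 * (p k ω.1 ω.2.1 - c2) - c3) 0) :=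
    (((measP p hpmeas k).sub measurable_const).const_mul c1 |>.sub measurable_const).max measurable_const
  apply Integrable.mono' (integrable_const (|c1| * (1 + |c2|) + |c3|)) hmeas.aestronglyMeasurable
  apply Filter.Eventually.of_forall
  intro ω
  have h1 : |p k ω.1 ω.2.1| ≤ 1 := by
    have := hp01 k ω.1 ω.2.1
    rw [abs_le]; constructor <;> [linarith [this.1]; exact this.2]
  have : |max (c1 * (p k ω.1 ω.2.1 - c2) - c3) 0| ≤ |c1 * (p k ω.1 ω.2.1 - c2) - c3| := by
    rcases le_or_gt (c1 * (p k ω.1 ω.2.1 - c2) - c3) 0 with h | h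
    · rw [max_eq_right h]; simp [abs_nonneg]
    · rw [max_eq_left h.le]
  refine le_trans this ?_
  calc |c1 * (p k ω.1 ω.2.1 - c2) - c3| ≤ |c1 * (p k ω.1 ω.2.1 - c2)| + |c3| := abs_sub _ _
    _ ≤ |c1| * (|p k ω.1 ω.2.1| + |c2|) + |c3| := by
        rw [abs_mul]
        have := abs_sub (p k ω.1 ω.2.1) c2
        nlinarith [abs_nonneg c1]
    _ ≤ |c1| * (1 + |c2|) + |c3| := by nlinarith [abs_nonneg c1, abs_nonneg c2]

lemma star_ks (hpmeas : ∀ k, Measurable fun q : 𝒳 × 𝒮 => p k q.1 q.2)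
    (hp01 : ∀ k x s, p k x s ∈ Icc (0:ℝ) 1)
    (hA1 : Assumption1 μ p) (k : Fin K) (s : 𝒮) (hπ : 0 < probS μ s)
    (lam lam' : ℝ) (γ γ' : Fin K → 𝒮 → ℝ) :
    condMean μ (fun ω => max (probS μ s * (p k ω.1 ω.2.1 - lam') - γ' k s) 0) s
      ≤ condMean μ (fun ω => max (probS μ s * (p k ω.1 ω.2.1 - lam) - γ k s) 0) s
        + (1 - Fks μ p k s (lam' + γ' k s / probS μ s))
          * ((probS μ s * lam + γ k s) - (probS μ s * lam' + γ' k s)) := by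
  set π := probS μ s with hπdef
  set u : ℝ := π * lam + γ k s with hu
  set u' : ℝ := π * lam' + γ' k s with hu'
  set τ' : ℝ := lam' + γ' k s / π with hτ'
  set S : Set (𝒳 × 𝒮 × Fin K) := {ω | ω.2.1 = s} with hS
  set A : Set (𝒳 × 𝒮 × Fin K) := {ω | τ' ≤ p k ω.1 ω.2.1} with hAdef
  have hA : MeasurableSet A := measGe p hpmeas k τ'
  have hiff : ∀ ω : 𝒳 × 𝒮 × Fin K, (τ' ≤ p k ω.1 ω.2.1) ↔ (u' ≤ π * p k ω.1 ω.2.1) := by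
    intro ω
    rw [hτ', hu']
    constructor
    · intro h
      have := mul_le_mul_of_nonneg_left h hπ.le
      rw [mul_add] at this
      rw [mul_div_cancel₀ _ hπ.ne'] at this
      linarith
    · intro h
      have h2 : u' / π ≤ p k ω.1 ω.2.1 := (div_le_iff₀ hπ).mpr (by linarith)
      have h3 : u' / π = lam' + γ' k s / π := by rw [hu']; field_simp
      rw [h3] at h2; exact h2
  have hpoint : ∀ ω : 𝒳 × 𝒮 × Fin K,
      max (π * (p k ω.1 ω.2.1 - lam') - γ' k s) 0
        ≤ max (π * (p k ω.1 ω.2.1 - lam) - γ k s) 0 + A.indicator (fun _ => u - u') ω := by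
    intro ω
    have e1 : π * (p k ω.1 ω.2.1 - lam') - γ' k s = π * p k ω.1 ω.2.1 - u' := by rw [hu']; ring
    have e2 : π * (p k ω.1 ω.2.1 - lam) - γ k s = π * p k ω.1 ω.2.1 - u := by rw [hu]; ring
    rw [e1, e2]
    by_cases hmem : ω ∈ A
    · rw [indicator_of_mem hmem]
      have h2 : u' ≤ π * p k ω.1 ω.2.1 := (hiff ω).mp hmem
      rw [max_eq_left (by linarith)]
      have : π * p k ω.1 ω.2.1 - u ≤ max (π * p k ω.1 ω.2.1 - u) 0 := le_max_left _ _
      linarith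
    · rw [indicator_of_notMem hmem, add_zero]
      have h2 : π * p k ω.1 ω.2.1 < u' := by
        by_contra h
        exact hmem ((hiff ω).mpr (not_lt.1 h))
      rw [max_eq_right (by linarith)]
      exact le_max_right _ _
  have hint1 := integ_max μ p hpmeas hp01 k π lam' (γ' k s) S
  have hint2 := integ_max μ p hpmeas hp01 k π lam (γ k s) S
  have hintg : Integrable (A.indicator (fun _ => u - u')) (μ.restrict S) :=
    (integrable_const (u - u')).indicator hA
  have hintsum : ∫ ω in S, (max (π * (p k ω.1 ω.2.1 - lam) - γ k s) 0 + A.indicator (fun _ => u - u') ω) ∂μ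
      = (∫ ω in S, max (π * (p k ω.1 ω.2.1 - lam) - γ k s) 0 ∂μ) + ∫ ω in S, A.indicator (fun _ => u - u') ω ∂μ :=
    integral_add hint2 hintg
  have hmono : ∫ ω in S, max (π * (p k ω.1 ω.2.1 - lam') - γ' k s) 0 ∂μ
      ≤ ∫ ω in S, (max (π * (p k ω.1 ω.2.1 - lam) - γ k s) 0 + A.indicator (fun _ => u - u') ω) ∂μ :=
    integral_mono hint1 (hint2.add hintg) hpoint
  have hindic : ∫ ω in S, A.indicator (fun _ => u - u') ω ∂μ = (1 - Fks μ p k s τ') * π * (u - u') := by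
    rw [integral_indicator_const _ hA, measureReal_def, Measure.restrict_apply hA]
    rw [meas_ge μ p hpmeas hA1 k s hπ τ']
    simp only [smul_eq_mul, hπdef]
  rw [hintsum, hindic] at hmono
  -- divide by π
  rw [condMean, condMean, ← hπdef, ← hS]
  rw [div_add' _ _ _ hπ.ne']
  apply div_le_div_of_nonneg_right ?_ hπ.le
  calc ∫ ω in S, max (π * (p k ω.1 ω.2.1 - lam') - γ' k s) 0 ∂μ
      ≤ (∫ ω in S, max (π * (p k ω.1 ω.2.1 - lam) - γ k s) 0 ∂μ) + (1 - Fks μ p k s τ') * π * (u - u') := hmono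
    _ = (∫ ω in S, max (π * (p k ω.1 ω.2.1 - lam) - γ k s) 0 ∂μ) + (1 - Fks μ p k s τ') * (u - u') * π := by ring


lemma master (hpmeas : ∀ k, Measurable fun q : 𝒳 × 𝒮 => p k q.1 q.2)
    (hp01 : ∀ k x s, p k x s ∈ Icc (0:ℝ) 1)
    (hA1 : Assumption1 μ p) (hπ : ∀ s : 𝒮, 0 < probS μ s) (β : ℝ)
    (lam : ℝ) (γ : Fin K → 𝒮 → ℝ) (hmem : (lam, γ) ∈ Δset K 𝒮)
    (hmin : ∀ r ∈ Δset K 𝒮, Hfun μ p β lam γ ≤ Hfun μ p β r.1 r.2)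
    (dl : ℝ) (dγ : Fin K → 𝒮 → ℝ) (hdγ : ∀ k, ∑ s : 𝒮, dγ k s = 0)
    (hfeas : ∀ᶠ t in 𝓝[>] (0:ℝ), 0 ≤ lam + t * dl) :
    0 ≤ dl * β - ∑ k : Fin K, ∑ s : 𝒮,
      (1 - Fks μ p k s (lam + γ k s / probS μ s)) * (probS μ s * dl + dγ k s) := by
  set ψ : ℝ → ℝ := fun t => dl * β - ∑ k : Fin K, ∑ s : 𝒮,
      (1 - Fks μ p k s ((lam + t * dl) + (γ k s + t * dγ k s) / probS μ s))
        * (probS μ s * dl + dγ k s) with hψ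
  have hstep : ∀ t : ℝ, 0 < t → 0 ≤ lam + t * dl → 0 ≤ ψ t := by
    intro t ht hfeas'
    set lam' := lam + t * dl with hlam'
    set γ' : Fin K → 𝒮 → ℝ := fun k s => γ k s + t * dγ k s with hγ'
    have hmem' : (lam', γ') ∈ Δset K 𝒮 := by
      refine ⟨hfeas', fun k => ?_⟩
      simp only [hγ', Finset.sum_add_distrib, ← Finset.mul_sum, hdγ k, hmem.2 k]
      ring
    have hHle := hmin (lam', γ') hmem'
    have hsum : Hfun μ p β lam' γ' ≤ Hfun μ p β lam γ + (∑ k : Fin K, ∑ s : 𝒮,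
        (1 - Fks μ p k s (lam' + γ' k s / probS μ s))
          * ((probS μ s * lam + γ k s) - (probS μ s * lam' + γ' k s))) + (lam' - lam) * β := by
      rw [Hfun, Hfun]
      have hterm : ∑ k : Fin K, ∑ s : 𝒮,
          condMean μ (fun ω => max (probS μ s * (p k ω.1 ω.2.1 - lam') - γ' k s) 0) s
          ≤ ∑ k : Fin K, ∑ s : 𝒮,
          (condMean μ (fun ω => max (probS μ s * (p k ω.1 ω.2.1 - lam) - γ k s) 0) s
            + (1 - Fks μ p k s (lam' + γ' k s / probS μ s))
              * ((probS μ s * lam + γ k s) - (probS μ s * lam' + γ' k s))) := by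
        apply Finset.sum_le_sum; intro k _
        apply Finset.sum_le_sum; intro s _
        exact star_ks μ p hpmeas hp01 hA1 k s (hπ s) lam lam' γ γ'
      simp only [Finset.sum_add_distrib] at hterm
      -- goal: LHS + lam'*β ≤ (A + lam*β) + B + (lam'-lam)*β
      have : (lam' : ℝ) * β = lam * β + (lam' - lam) * β := by ring
      linarith
    have hψt : 0 ≤ t * ψ t := by
      have e1 : ∀ k s, (probS μ s * lam + γ k s) - (probS μ s * lam' + γ' k s)
          = -t * (probS μ s * dl + dγ k s) := by
        intro k s; rw [hlam', hγ']; ring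
      have e2 : (lam' - lam) * β = t * (dl * β) := by rw [hlam']; ring
      have e3 : ∑ k : Fin K, ∑ s : 𝒮, (1 - Fks μ p k s (lam' + γ' k s / probS μ s))
          * ((probS μ s * lam + γ k s) - (probS μ s * lam' + γ' k s))
          = -t * ∑ k : Fin K, ∑ s : 𝒮, (1 - Fks μ p k s ((lam + t * dl) + (γ k s + t * dγ k s) / probS μ s))
              * (probS μ s * dl + dγ k s) := by
        rw [Finset.mul_sum]
        apply Finset.sum_congr rfl; intro k _
        rw [Finset.mul_sum]
        apply Finset.sum_congr rfl; intro s _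
        rw [e1 k s, hlam', hγ']
        ring
      rw [e3, e2] at hsum
      have := le_trans hHle hsum
      rw [hψ]
      simp only []
      nlinarith [this]
    nlinarith [hψt, ht]
  have hcont : ContinuousOn ψ univ := by
    apply Continuous.continuousOn
    apply Continuous.sub continuous_const
    apply continuous_finset_sum; intro k _
    apply continuous_finset_sum; intro s _
    apply Continuous.mul ?_ continuous_const
    apply Continuous.sub continuous_const
    exact (hA1 k s).comp (by continuity)
  have htends : Tendsto ψ (𝓝[>] (0:ℝ)) (𝓝 (ψ 0)) := by
    have := (hcont.continuousAt (x := 0) (by simp [Filter.univ_mem])).tendsto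
    exact this.mono_left nhdsWithin_le_nhds
  have hev : ∀ᶠ t in 𝓝[>] (0:ℝ), 0 ≤ ψ t := by
    filter_upwards [hfeas, self_mem_nhdsWithin] with t h1 h2
    exact hstep t h2 h1
  have hfinal : 0 ≤ ψ 0 := ge_of_tendsto htends hev
  rw [hψ] at hfinal
  simp only [zero_mul, add_zero, mul_zero] at hfinal
  exact hfinal


lemma c_const (hpmeas : ∀ k, Measurable fun q : 𝒳 × 𝒮 => p k q.1 q.2)
    (hp01 : ∀ k x s, p k x s ∈ Icc (0:ℝ) 1)
    (hA1 : Assumption1 μ p) (hπ : ∀ s : 𝒮, 0 < probS μ s) (β : ℝ)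
    (lam : ℝ) (γ : Fin K → 𝒮 → ℝ) (hmem : (lam, γ) ∈ Δset K 𝒮)
    (hmin : ∀ r ∈ Δset K 𝒮, Hfun μ p β lam γ ≤ Hfun μ p β r.1 r.2)
    (k : Fin K) (s0 s1 : 𝒮) :
    1 - Fks μ p k s0 (lam + γ k s0 / probS μ s0)
      = 1 - Fks μ p k s1 (lam + γ k s1 / probS μ s1) := by
  classical
  rcases eq_or_ne s0 s1 with h | hne
  · rw [h]
  have key : ∀ s0' s1' : 𝒮, s0' ≠ s1' →
      1 - Fks μ p k s0' (lam + γ k s0' / probS μ s0')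
        ≤ 1 - Fks μ p k s1' (lam + γ k s1' / probS μ s1') := by
    intro s0' s1' hne'
    set dγ : Fin K → 𝒮 → ℝ := fun k' s =>
      if k' = k then (if s = s0' then (1:ℝ) else 0) - (if s = s1' then 1 else 0) else 0 with hdγdef
    have hsum : ∀ k', ∑ s : 𝒮, dγ k' s = 0 := by
      intro k'
      by_cases hk : k' = k
      · simp [hdγdef, hk, Finset.sum_sub_distrib, Finset.sum_ite_eq']
      · simp [hdγdef, hk]
    have hmaster := master μ p hpmeas hp01 hA1 hπ β lam γ hmem hmin 0 dγ hsum
      (Filter.Eventually.of_forall (fun t => by simpa using hmem.1))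
    have hsumval : ∑ k' : Fin K, ∑ s : 𝒮,
        (1 - Fks μ p k' s (lam + γ k' s / probS μ s)) * (probS μ s * 0 + dγ k' s)
        = (1 - Fks μ p k s0' (lam + γ k s0' / probS μ s0'))
          - (1 - Fks μ p k s1' (lam + γ k s1' / probS μ s1')) := by
      rw [Finset.sum_eq_single k]
      · simp only [hdγdef, if_pos rfl, mul_zero, zero_add, mul_sub, Finset.sum_sub_distrib,
          mul_ite, mul_one]
        rw [Finset.sum_ite_eq' Finset.univ s0'
            (fun s => 1 - Fks μ p k s (lam + γ k s / probS μ s)),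
          Finset.sum_ite_eq' Finset.univ s1'
            (fun s => 1 - Fks μ p k s (lam + γ k s / probS μ s))]
        simp
      · intro k' _ hk'
        simp [hdγdef, hk']
      · intro h; exact absurd (Finset.mem_univ k) h
    rw [hsumval] at hmaster
    nlinarith [hmaster]
  exact le_antisymm (by linarith [key s0 s1 hne]) (by linarith [key s1 s0 hne.symm])

lemma lam_deriv_ge (hpmeas : ∀ k, Measurable fun q : 𝒳 × 𝒮 => p k q.1 q.2)
    (hp01 : ∀ k x s, p k x s ∈ Icc (0:ℝ) 1)
    (hA1 : Assumption1 μ p) (hπ : ∀ s : 𝒮, 0 < probS μ s) (β : ℝ)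
    (lam : ℝ) (γ : Fin K → 𝒮 → ℝ) (hmem : (lam, γ) ∈ Δset K 𝒮)
    (hmin : ∀ r ∈ Δset K 𝒮, Hfun μ p β lam γ ≤ Hfun μ p β r.1 r.2) :
    ∑ k : Fin K, ∑ s : 𝒮,
      (1 - Fks μ p k s (lam + γ k s / probS μ s)) * probS μ s ≤ β := by
  have hfeas : ∀ᶠ t in 𝓝[>] (0:ℝ), 0 ≤ lam + t * 1 := by
    filter_upwards [self_mem_nhdsWithin] with t ht
    have : (0:ℝ) < t := ht
    nlinarith [hmem.1]
  have hmaster := master μ p hpmeas hp01 hA1 hπ β lam γ hmem hmin 1 0 (fun k => by simp) hfeas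
  have e : (∑ k : Fin K, ∑ s : 𝒮, (1 - Fks μ p k s (lam + γ k s / probS μ s))
      * (probS μ s * 1 + (0 : Fin K → 𝒮 → ℝ) k s))
      = ∑ k : Fin K, ∑ s : 𝒮, (1 - Fks μ p k s (lam + γ k s / probS μ s)) * probS μ s := by
    apply Finset.sum_congr rfl; intro k _
    apply Finset.sum_congr rfl; intro s _
    simp
  rw [e] at hmaster
  nlinarith [hmaster]

lemma lam_deriv_le (hpmeas : ∀ k, Measurable fun q : 𝒳 × 𝒮 => p k q.1 q.2)
    (hp01 : ∀ k x s, p k x s ∈ Icc (0:ℝ) 1)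
    (hA1 : Assumption1 μ p) (hπ : ∀ s : 𝒮, 0 < probS μ s) (β : ℝ)
    (lam : ℝ) (γ : Fin K → 𝒮 → ℝ) (hmem : (lam, γ) ∈ Δset K 𝒮)
    (hmin : ∀ r ∈ Δset K 𝒮, Hfun μ p β lam γ ≤ Hfun μ p β r.1 r.2)
    (hlam : 0 < lam) :
    β ≤ ∑ k : Fin K, ∑ s : 𝒮,
      (1 - Fks μ p k s (lam + γ k s / probS μ s)) * probS μ s := by
  have hfeas : ∀ᶠ t in 𝓝[>] (0:ℝ), 0 ≤ lam + t * (-1) := by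
    have hIoo : Ioo (0:ℝ) lam ∈ 𝓝[>] (0:ℝ) := Ioo_mem_nhdsGT_of_mem (by simp [hlam])
    filter_upwards [hIoo] with t ht
    nlinarith [ht.2]
  have hmaster := master μ p hpmeas hp01 hA1 hπ β lam γ hmem hmin (-1) 0 (fun k => by simp) hfeas
  have e : (∑ k : Fin K, ∑ s : 𝒮, (1 - Fks μ p k s (lam + γ k s / probS μ s))
      * (probS μ s * (-1) + (0 : Fin K → 𝒮 → ℝ) k s))
      = -∑ k : Fin K, ∑ s : 𝒮, (1 - Fks μ p k s (lam + γ k s / probS μ s)) * probS μ s := by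
    rw [← Finset.sum_neg_distrib]
    apply Finset.sum_congr rfl; intro k _
    rw [← Finset.sum_neg_distrib]
    apply Finset.sum_congr rfl; intro s _
    simp
  rw [e] at hmaster
  nlinarith [hmaster]


lemma Fks_zero_of_nonpos (hA2 : Assumption2 μ p) (k : Fin K) (s : 𝒮) {t : ℝ} (ht : t ≤ 0) :
    Fks μ p k s t = 0 := by
  obtain ⟨d, hc, hpos, hzero, hrepr⟩ := hA2 k s
  rw [hrepr]
  have hae : d =ᵐ[volume.restrict (Iic t)] 0 := by
    rw [EventuallyEq, ae_restrict_iff' measurableSet_Iic]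
    have h0 : ∀ᵐ u : ℝ, u ≠ (0:ℝ) := by
      rw [ae_iff]
      simpa using measure_singleton (0:ℝ)
    filter_upwards [h0] with u hu hut
    exact hzero u (fun hmem => hu (le_antisymm (hut.trans ht) hmem.1))
  exact integral_eq_zero_of_ae hae

lemma d_integrable {d : ℝ → ℝ} (hc : ContinuousOn d (Icc 0 1))
    (hzero : ∀ u, u ∉ Icc (0:ℝ) 1 → d u = 0) : Integrable d (volume : Measure ℝ) := by
  have heq : d = (Icc (0:ℝ) 1).indicator d := by
    funext u
    by_cases h : u ∈ Icc (0:ℝ) 1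
    · rw [indicator_of_mem h]
    · rw [indicator_of_notMem h, hzero u h]
  rw [heq]
  rw [integrable_indicator_iff measurableSet_Icc]
  exact hc.integrableOn_compact isCompact_Icc

lemma Fks_strictMono (hA2 : Assumption2 μ p) (k : Fin K) (s : 𝒮) {a b : ℝ}
    (h0 : 0 ≤ a) (hab : a < b) (hb : b ≤ 1) : Fks μ p k s a < Fks μ p k s b := by
  obtain ⟨d, hc, hpos, hzero, hrepr⟩ := hA2 k s
  rw [hrepr, hrepr]
  have hint : Integrable d (volume : Measure ℝ) := d_integrable hc hzero
  have hsplit : ∫ u in Iic b, d u = (∫ u in Iic a, d u) + ∫ u in Ioc a b, d u := by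
    rw [← setIntegral_union (Iic_disjoint_Ioc le_rfl) measurableSet_Ioc
      hint.integrableOn hint.integrableOn, Iic_union_Ioc_eq_Iic hab.le]
  rw [hsplit]
  have hpos' : 0 < ∫ u in Ioc a b, d u := by
    rw [setIntegral_pos_iff_support_of_nonneg_ae]
    · have hsub : Ioc a b ⊆ Function.support d := by
        intro u hu
        have hmem : u ∈ Icc (0:ℝ) 1 := ⟨h0.trans hu.1.le, hu.2.trans hb⟩
        exact (hpos u hmem).ne'
      rw [inter_eq_self_of_subset_right hsub]
      simp [hab]
    · apply Filter.Eventually.of_forall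
      intro u
      by_cases h : u ∈ Icc (0:ℝ) 1
      · exact (hpos u h).le
      · simp [hzero u h]
    · exact hint.integrableOn
  linarith

lemma Fks_pos_of_pos (hA2 : Assumption2 μ p) (k : Fin K) (s : 𝒮)
    (hπ : 0 < probS μ s) {t : ℝ} (ht : 0 < t) : 0 < Fks μ p k s t := by
  have h1 : Fks μ p k s 0 = 0 := Fks_zero_of_nonpos μ p hA2 k s le_rfl
  rcases le_or_gt t 1 with h | h
  · have := Fks_strictMono μ p hA2 k s le_rfl ht h
    linarith
  · have h2 := Fks_strictMono μ p hA2 k s le_rfl one_pos le_rfl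
    have h3 := Fks_mono μ p k s hπ h.le
    linarith

lemma Fks_lt_one_of_lt_one (hp01 : ∀ k x s, p k x s ∈ Icc (0:ℝ) 1) (hA2 : Assumption2 μ p)
    (k : Fin K) (s : 𝒮) (hπ : 0 < probS μ s) {t : ℝ} (ht : t < 1) : Fks μ p k s t < 1 := by
  have h1 : Fks μ p k s 1 = 1 := Fks_one μ p hp01 k s hπ le_rfl
  rcases le_or_gt t 0 with h | h
  · rw [Fks_zero_of_nonpos μ p hA2 k s h]; norm_num
  · have := Fks_strictMono μ p hA2 k s h.le ht le_rfl
    linarith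


end Aux

theorem statement8
    {𝒳 𝒮 : Type*} [MeasurableSpace 𝒳] [MeasurableSpace 𝒮] [MeasurableSingletonClass 𝒮]
    [Fintype 𝒮] [Nonempty 𝒮] {K : ℕ} (hK : 2 ≤ K)
    (μ : Measure (𝒳 × 𝒮 × Fin K)) (hμ : IsProbabilityMeasure μ)
    (hπ : ∀ s : 𝒮, 0 < probS μ s)
    (p : Fin K → 𝒳 → 𝒮 → ℝ)
    (hpmeas : ∀ k, Measurable fun q : 𝒳 × 𝒮 => p k q.1 q.2)
    (hp01 : ∀ k x s, p k x s ∈ Icc (0:ℝ) 1)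
    (hpsum : ∀ x s, ∑ k : Fin K, p k x s = 1)
    (hlink : ∀ (k : Fin K) (A : Set (𝒳 × 𝒮)), MeasurableSet A →
      (μ {ω | ω.2.2 = k ∧ (ω.1, ω.2.1) ∈ A}).toReal
        = ∫ ω in {ω : 𝒳 × 𝒮 × Fin K | (ω.1, ω.2.1) ∈ A}, p k ω.1 ω.2.1 ∂μ)
    (β : ℝ) (hβ0 : 0 < β) (hβK : β < (K : ℝ))
    (hA1 : Assumption1 μ p)
    (lam : ℝ) (γ : Fin K → 𝒮 → ℝ) (hmem : (lam, γ) ∈ Δset K 𝒮)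
    (hmin : ∀ r ∈ Δset K 𝒮, Hfun μ p β lam γ ≤ Hfun μ p β r.1 r.2)
    (hA2 : Assumption2 μ p) :
    (∀ (k : Fin K) (s : 𝒮),
      1 - Fks μ p k s (lam + γ k s / probS μ s)
          = (μ (memEvent (oracle μ p lam γ) k)).toReal ∧
      lam + γ k s / probS μ s
          = ginv (fun t => 1 - Fks μ p k s t) ((μ (memEvent (oracle μ p lam γ) k)).toReal)) ∧
    (∀ (x : 𝒳) (s : 𝒮), oracle μ p lam γ x s
        = {k : Fin K | ginv (fun t => 1 - Fks μ p k s t)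
            ((μ (memEvent (oracle μ p lam γ) k)).toReal) ≤ p k x s}) := by
  classical
  have claim1 : ∀ (k : Fin K) (s : 𝒮), 1 - Fks μ p k s (lam + γ k s / probS μ s)
      = (μ (memEvent (oracle μ p lam γ) k)).toReal := by
    intro k s
    have hb := betastar μ p hpmeas hA1 hπ lam γ k
    have hcongr : ∑ s' : 𝒮, (1 - Fks μ p k s' (lam + γ k s' / probS μ s')) * probS μ s'
        = ∑ s' : 𝒮, (1 - Fks μ p k s (lam + γ k s / probS μ s)) * probS μ s' := by
      apply Finset.sum_congr rfl
      intro s' _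
      rw [c_const μ p hpmeas hp01 hA1 hπ β lam γ hmem hmin k s' s]
    rw [hcongr, ← Finset.mul_sum, sum_probS μ, mul_one] at hb
    exact hb.symm
  have havg : ∀ k : Fin K, ∑ s : 𝒮, probS μ s * (lam + γ k s / probS μ s) = lam := by
    intro k
    have he : ∀ s : 𝒮, probS μ s * (lam + γ k s / probS μ s) = probS μ s * lam + γ k s := by
      intro s
      rw [mul_add, mul_div_cancel₀ _ (hπ s).ne']
    rw [Finset.sum_congr rfl (fun s _ => he s), Finset.sum_add_distrib, ← Finset.sum_mul,
      sum_probS μ, hmem.2 k, one_mul, add_zero]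
  -- τ ∈ [0,1]
  have hτ0 : ∀ (k : Fin K) (s : 𝒮), 0 ≤ lam + γ k s / probS μ s := by
    intro k s0
    by_contra hneg
    push_neg at hneg
    have hcone : (μ (memEvent (oracle μ p lam γ) k)).toReal = 1 := by
      rw [← claim1 k s0, Fks_zero_of_nonpos μ p hA2 k s0 hneg.le, sub_zero]
    have hall : ∀ s : 𝒮, lam + γ k s / probS μ s ≤ 0 := by
      intro s
      by_contra hpos
      push_neg at hpos
      have h1 := Fks_pos_of_pos μ p hA2 k s (hπ s) hpos
      have h2 := claim1 k s
      rw [hcone] at h2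
      linarith
    have hlt : ∑ s : 𝒮, probS μ s * (lam + γ k s / probS μ s) < ∑ s : 𝒮, (0:ℝ) := by
      apply Finset.sum_lt_sum
      · intro s _; nlinarith [hπ s, hall s]
      · exact ⟨s0, Finset.mem_univ s0, by nlinarith [hπ s0]⟩
    rw [havg k, Finset.sum_const, smul_zero] at hlt
    exact absurd hmem.1 (not_le.mpr hlt)
  have hτ1 : ∀ (k : Fin K) (s : 𝒮), lam + γ k s / probS μ s ≤ 1 := by
    intro k0 s0
    by_contra hgt
    push_neg at hgt
    have hczero : (μ (memEvent (oracle μ p lam γ) k0)).toReal = 0 := by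
      rw [← claim1 k0 s0, Fks_one μ p hp01 k0 s0 (hπ s0) hgt.le, sub_self]
    have hall : ∀ s : 𝒮, 1 ≤ lam + γ k0 s / probS μ s := by
      intro s
      by_contra hlt1
      push_neg at hlt1
      have h1 := Fks_lt_one_of_lt_one μ p hp01 hA2 k0 s (hπ s) hlt1
      have h2 := claim1 k0 s
      rw [hczero] at h2
      linarith
    have hlam1 : 1 < lam := by
      rw [← havg k0]
      calc (1:ℝ) = ∑ s : 𝒮, probS μ s := (sum_probS μ).symm
        _ < ∑ s : 𝒮, probS μ s * (lam + γ k0 s / probS μ s) := by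
            apply Finset.sum_lt_sum
            · intro s _
              nlinarith [hπ s, hall s]
            · exact ⟨s0, Finset.mem_univ s0, by nlinarith [hπ s0]⟩
    have hck : ∀ k : Fin K, (μ (memEvent (oracle μ p lam γ) k)).toReal = 0 := by
      intro k
      have hex : ∃ s : 𝒮, 1 < lam + γ k s / probS μ s := by
        by_contra hno
        push_neg at hno
        have hle2 : ∑ s : 𝒮, probS μ s * (lam + γ k s / probS μ s) ≤ ∑ s : 𝒮, probS μ s := by
          apply Finset.sum_le_sum
          intro s _
          nlinarith [hπ s, hno s]
        rw [havg k, sum_probS μ] at hle2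
        linarith
      obtain ⟨s', hs'⟩ := hex
      rw [← claim1 k s', Fks_one μ p hp01 k s' (hπ s') hs'.le, sub_self]
    have hle := lam_deriv_le μ p hpmeas hp01 hA1 hπ β lam γ hmem hmin (by linarith)
    have hzs : ∑ k : Fin K, ∑ s : 𝒮,
        (1 - Fks μ p k s (lam + γ k s / probS μ s)) * probS μ s = 0 := by
      apply Finset.sum_eq_zero
      intro k _
      apply Finset.sum_eq_zero
      intro s _
      rw [claim1 k s, hck k, zero_mul]
    rw [hzs] at hle
    linarith
  have claim2 : ∀ (k : Fin K) (s : 𝒮), lam + γ k s / probS μ s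
      = ginv (fun t => 1 - Fks μ p k s t) ((μ (memEvent (oracle μ p lam γ) k)).toReal) := by
    intro k s
    rw [ginv, ← claim1 k s]
    have hsetset : {t : ℝ | (fun t => 1 - Fks μ p k s t) t ≤ 1 - Fks μ p k s (lam + γ k s / probS μ s)}
        = {t : ℝ | Fks μ p k s (lam + γ k s / probS μ s) ≤ Fks μ p k s t} := by
      ext t; simp only [mem_setOf_eq]; constructor <;> intro h <;> linarith
    rw [hsetset]
    rcases eq_or_lt_of_le (hτ0 k s) with h0 | h0
    · have hFks0 : Fks μ p k s (lam + γ k s / probS μ s) = 0 := by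
        rw [← h0]
        exact Fks_zero_of_nonpos μ p hA2 k s le_rfl
      have huniv : {t : ℝ | Fks μ p k s (lam + γ k s / probS μ s) ≤ Fks μ p k s t} = univ := by
        ext t
        simp only [mem_setOf_eq, mem_univ, iff_true, hFks0]
        exact Fks_nonneg μ p k s t (hπ s)
      rw [huniv, Real.sInf_of_not_bddBelow (by exact not_bddBelow_univ), ← h0]
    · have hIci : {t : ℝ | Fks μ p k s (lam + γ k s / probS μ s) ≤ Fks μ p k s t}
          = Ici (lam + γ k s / probS μ s) := by
        ext t
        simp only [mem_setOf_eq, mem_Ici]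
        constructor
        · intro h
          by_contra hlt
          push_neg at hlt
          have hlt2 : Fks μ p k s t < Fks μ p k s (lam + γ k s / probS μ s) := by
            rcases le_or_gt t 0 with h2 | h2
            · rw [Fks_zero_of_nonpos μ p hA2 k s h2]
              exact Fks_pos_of_pos μ p hA2 k s (hπ s) h0
            · exact Fks_strictMono μ p hA2 k s h2.le hlt (hτ1 k s)
          linarith
        · intro h
          exact Fks_mono μ p k s (hπ s) h
      rw [hIci, csInf_Ici]
  refine ⟨fun k s => ⟨claim1 k s, claim2 k s⟩, fun x s => ?_⟩
  ext k
  simp only [oracle, mem_setOf_eq]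
  rw [← claim2 k s]

end
end

section
/- Assume Assumption 1 (continuity). Let b_k ∈ (0,1) for each k ∈ [K], and define the set-valued classifier Γ_fair(x,s) := {k ∈ [K] : p_k(x,s) ≥ F̄_{k,s}⁻¹(b_k)}. Then for every k ∈ [K] and s ∈ 𝒮, ℙ(k ∈ Γ_fair(X,S) | S = s) = b_k. In particular, Γ_fair is DP-fair and 𝒯(Γ_fair) = Σ_{k=1}^K b_k. -/
open MeasureTheory Set Filter

noncomputable section

theorem statement9
    {𝒳 𝒮 : Type*} [MeasurableSpace 𝒳] [MeasurableSpace 𝒮] [MeasurableSingletonClass 𝒮]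
    [Fintype 𝒮] [Nonempty 𝒮] {K : ℕ} (hK : 2 ≤ K)
    (μ : Measure (𝒳 × 𝒮 × Fin K)) (hμ : IsProbabilityMeasure μ)
    (hπ : ∀ s : 𝒮, 0 < probS μ s)
    (p : Fin K → 𝒳 → 𝒮 → ℝ)
    (hpmeas : ∀ k, Measurable fun q : 𝒳 × 𝒮 => p k q.1 q.2)
    (hp01 : ∀ k x s, p k x s ∈ Icc (0:ℝ) 1)
    (hpsum : ∀ x s, ∑ k : Fin K, p k x s = 1)
    (hlink : ∀ (k : Fin K) (A : Set (𝒳 × 𝒮)), MeasurableSet A →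
      (μ {ω | ω.2.2 = k ∧ (ω.1, ω.2.1) ∈ A}).toReal
        = ∫ ω in {ω : 𝒳 × 𝒮 × Fin K | (ω.1, ω.2.1) ∈ A}, p k ω.1 ω.2.1 ∂μ)
    (hA1 : Assumption1 μ p)
    (b : Fin K → ℝ) (hb : ∀ k, b k ∈ Ioo (0:ℝ) 1) :
    ∀ Γfair : 𝒳 → 𝒮 → Set (Fin K),
      (∀ x s, Γfair x s = {k : Fin K | ginv (fun t => 1 - Fks μ p k s t) (b k) ≤ p k x s}) →
      (∀ (k : Fin K) (s : 𝒮), condProb μ (memEvent Γfair k) s = b k) ∧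
      DPfair μ Γfair ∧ expSize μ Γfair = ∑ k : Fin K, b k := by
  classical
  intro Γfair hΓ
  set θ : Fin K → 𝒮 → ℝ := fun k s => ginv (fun t => 1 - Fks μ p k s t) (b k) with hθ
  have hmS : Measurable fun ω : 𝒳 × 𝒮 × Fin K => ω.2.1 := measurable_snd.fst
  have hmp : ∀ k, Measurable fun ω : 𝒳 × 𝒮 × Fin K => p k ω.1 ω.2.1 := fun k =>
    (hpmeas k).comp (measurable_fst.prodMk hmS)
  have hSs : ∀ s : 𝒮, MeasurableSet {ω : 𝒳 × 𝒮 × Fin K | ω.2.1 = s} := fun s =>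
    hmS (measurableSet_singleton s)
  have hmem : ∀ k, memEvent Γfair k = {ω : 𝒳 × 𝒮 × Fin K | θ k ω.2.1 ≤ p k ω.1 ω.2.1} := by
    intro k; ext ω; simp [memEvent, hΓ, hθ]
  have hmemMeas : ∀ k, MeasurableSet (memEvent Γfair k) := by
    intro k
    rw [hmem k]
    have : {ω : 𝒳 × 𝒮 × Fin K | θ k ω.2.1 ≤ p k ω.1 ω.2.1}
        = ⋃ s : 𝒮, ({ω : 𝒳 × 𝒮 × Fin K | θ k s ≤ p k ω.1 ω.2.1} ∩ {ω | ω.2.1 = s}) := by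
      ext ω
      simp only [mem_iUnion, mem_inter_iff, mem_setOf_eq]
      constructor
      · intro h; exact ⟨ω.2.1, h, rfl⟩
      · rintro ⟨s, h1, h2⟩; rw [← h2] at h1; exact h1
    rw [this]
    exact MeasurableSet.iUnion fun s => ((hmp k) measurableSet_Ici).inter (hSs s)
  have hμfin : ∀ A : Set (𝒳 × 𝒮 × Fin K), μ A ≠ ⊤ := fun A => measure_ne_top μ A
  -- key computation for each (k, s)
  have key : ∀ (k : Fin K) (s : 𝒮), condProb μ (memEvent Γfair k) s = b k := by
    intro k s
    have hπpos := hπ s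
    have hπne : probS μ s ≠ 0 := hπpos.ne'
    set F : ℝ → ℝ := fun t => Fks μ p k s t with hF
    have hFmul : ∀ t, probS μ s * F t
        = (μ ({ω | p k ω.1 ω.2.1 ≤ t} ∩ {ω : 𝒳 × 𝒮 × Fin K | ω.2.1 = s})).toReal := by
      intro t
      show probS μ s * ((μ _).toReal / probS μ s) = _
      field_simp
    have hFmono : Monotone F := by
      intro t t' htt
      have hsub : {ω : 𝒳 × 𝒮 × Fin K | p k ω.1 ω.2.1 ≤ t} ∩ {ω | ω.2.1 = s}
          ⊆ {ω | p k ω.1 ω.2.1 ≤ t'} ∩ {ω | ω.2.1 = s} :=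
        inter_subset_inter_left _ fun ω h => le_trans h htt
      have h2 := ENNReal.toReal_mono (hμfin _) (measure_mono hsub)
      show (μ _).toReal / probS μ s ≤ (μ _).toReal / probS μ s
      gcongr
    have hFcont : Continuous F := hA1 k s
    have hF1 : F 1 = 1 := by
      have : {ω : 𝒳 × 𝒮 × Fin K | p k ω.1 ω.2.1 ≤ 1} = univ := by
        ext ω; simp [(hp01 k ω.1 ω.2.1).2]
      show (μ _).toReal / probS μ s = 1
      rw [this, univ_inter]
      exact div_self hπne
    have hFneg : ∀ t, t < 0 → F t = 0 := by
      intro t ht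
      have : {ω : 𝒳 × 𝒮 × Fin K | p k ω.1 ω.2.1 ≤ t} = ∅ := by
        ext ω
        simp only [mem_setOf_eq, mem_empty_iff_false, iff_false, not_le]
        exact lt_of_lt_of_le ht (hp01 k ω.1 ω.2.1).1
      show (μ _).toReal / probS μ s = 0
      rw [this, empty_inter, measure_empty]
      simp
    set T : Set ℝ := {t | 1 - F t ≤ b k} with hT
    have hTne : T.Nonempty := ⟨1, by simp [hT, hF1]; linarith [(hb k).1]⟩
    have hTbdd : BddBelow T := by
      refine ⟨0, fun t ht => ?_⟩
      by_contra hlt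
      push_neg at hlt
      have := hFneg t hlt
      simp only [hT, mem_setOf_eq, this] at ht
      linarith [(hb k).2]
    have hTclosed : IsClosed T := IsClosed.preimage (continuous_const.sub hFcont) isClosed_Iic
    have ht0 : θ k s = sInf T := rfl
    set t0 : ℝ := sInf T with ht0def
    have ht0mem : t0 ∈ T := hTclosed.csInf_mem hTne hTbdd
    have hFt0 : 1 - F t0 = b k := by
      refine le_antisymm ht0mem ?_
      have htend : Tendsto (fun t => 1 - F t) (nhdsWithin t0 (Iio t0)) (nhds (1 - F t0)) :=
        ((continuous_const.sub hFcont).tendsto t0).mono_left nhdsWithin_le_nhds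
      refine ge_of_tendsto htend ?_
      refine eventually_mem_nhdsWithin.mono fun t ht => ?_
      have : t ∉ T := fun hmem' => absurd (csInf_le hTbdd hmem') (not_le.mpr ht)
      simp only [hT, mem_setOf_eq, not_le] at this
      exact this.le
    -- measure of the strict event
    have hlt_meas : (μ ({ω : 𝒳 × 𝒮 × Fin K | p k ω.1 ω.2.1 < t0} ∩ {ω | ω.2.1 = s})).toReal
        = probS μ s * F t0 := by
      refine le_antisymm ?_ ?_
      · rw [hFmul]
        refine ENNReal.toReal_mono (hμfin _) (measure_mono ?_)
        exact inter_subset_inter_left _ fun ω h =>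
          show p k ω.1 ω.2.1 ≤ t0 from le_of_lt h
      · have htend : Tendsto (fun t => probS μ s * F t) (nhdsWithin t0 (Iio t0))
            (nhds (probS μ s * F t0)) :=
          ((continuous_const.mul hFcont).tendsto t0).mono_left nhdsWithin_le_nhds
        refine le_of_tendsto htend ?_
        refine eventually_mem_nhdsWithin.mono fun t ht => ?_
        rw [hFmul]
        refine ENNReal.toReal_mono (hμfin _) (measure_mono ?_)
        exact inter_subset_inter_left _ fun ω h =>
          show p k ω.1 ω.2.1 < t0 from lt_of_le_of_lt h ht
    have hsplit2 : (μ ({ω : 𝒳 × 𝒮 × Fin K | t0 ≤ p k ω.1 ω.2.1} ∩ {ω | ω.2.1 = s})).toReal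
        = probS μ s - probS μ s * F t0 := by
      have hdisj : Disjoint ({ω : 𝒳 × 𝒮 × Fin K | p k ω.1 ω.2.1 < t0} ∩ {ω | ω.2.1 = s})
          ({ω : 𝒳 × 𝒮 × Fin K | t0 ≤ p k ω.1 ω.2.1} ∩ {ω | ω.2.1 = s}) := by
        refine Set.disjoint_left.mpr ?_
        rintro ω ⟨h1, _⟩ ⟨h2, _⟩
        exact absurd (show t0 ≤ p k ω.1 ω.2.1 from h2)
          (not_le.mpr (show p k ω.1 ω.2.1 < t0 from h1))
      have hunion : ({ω : 𝒳 × 𝒮 × Fin K | p k ω.1 ω.2.1 < t0} ∩ {ω | ω.2.1 = s})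
          ∪ ({ω : 𝒳 × 𝒮 × Fin K | t0 ≤ p k ω.1 ω.2.1} ∩ {ω | ω.2.1 = s})
          = {ω : 𝒳 × 𝒮 × Fin K | ω.2.1 = s} := by
        ext ω
        simp only [mem_union, mem_inter_iff, mem_setOf_eq]
        constructor
        · rintro (⟨_, h⟩ | ⟨_, h⟩) <;> exact h
        · intro h
          rcases lt_or_ge (p k ω.1 ω.2.1) t0 with hc | hc
          · exact Or.inl ⟨hc, h⟩
          · exact Or.inr ⟨hc, h⟩
      have hmeq : μ ({ω : 𝒳 × 𝒮 × Fin K | p k ω.1 ω.2.1 < t0} ∩ {ω | ω.2.1 = s})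
          + μ ({ω : 𝒳 × 𝒮 × Fin K | t0 ≤ p k ω.1 ω.2.1} ∩ {ω | ω.2.1 = s})
          = μ {ω : 𝒳 × 𝒮 × Fin K | ω.2.1 = s} := by
        rw [← measure_union hdisj (((hmp k) measurableSet_Ici).inter (hSs s)), hunion]
      have := congrArg ENNReal.toReal hmeq
      rw [ENNReal.toReal_add (hμfin _) (hμfin _), hlt_meas] at this
      have hπdef : (μ {ω : 𝒳 × 𝒮 × Fin K | ω.2.1 = s}).toReal = probS μ s := rfl
      rw [hπdef] at this
      linarith
    have hev : memEvent Γfair k ∩ {ω : 𝒳 × 𝒮 × Fin K | ω.2.1 = s}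
        = {ω : 𝒳 × 𝒮 × Fin K | t0 ≤ p k ω.1 ω.2.1} ∩ {ω | ω.2.1 = s} := by
      ext ω
      obtain ⟨x, s', y⟩ := ω
      rw [hmem k]
      simp only [mem_inter_iff, mem_setOf_eq]
      constructor
      · rintro ⟨h1, h2⟩; subst h2; exact ⟨h1, rfl⟩
      · rintro ⟨h1, h2⟩; subst h2; exact ⟨h1, rfl⟩
    show (μ (memEvent Γfair k ∩ {ω : 𝒳 × 𝒮 × Fin K | ω.2.1 = s})).toReal / probS μ s = b k
    rw [hev, hsplit2,
      show probS μ s - probS μ s * F t0 = (1 - F t0) * probS μ s by ring, hFt0]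
    exact mul_div_cancel_right₀ _ hπne
  -- decomposition over 𝒮
  have hsplit : ∀ (A : Set (𝒳 × 𝒮 × Fin K)), MeasurableSet A →
      (μ A).toReal = ∑ s : 𝒮, (μ (A ∩ {ω | ω.2.1 = s})).toReal := by
    intro A hA
    have hAeq : A = ⋃ s ∈ (Finset.univ : Finset 𝒮), A ∩ {ω | ω.2.1 = s} := by
      ext ω; simp
    have hdisj : (↑(Finset.univ : Finset 𝒮) : Set 𝒮).PairwiseDisjoint
        fun s => A ∩ {ω : 𝒳 × 𝒮 × Fin K | ω.2.1 = s} := by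
      intro s _ s' _ hss
      refine Set.disjoint_left.mpr ?_
      rintro ω ⟨_, h1⟩ ⟨_, h2⟩
      exact hss (h1 ▸ h2 ▸ rfl)
    calc (μ A).toReal = (μ (⋃ s ∈ (Finset.univ : Finset 𝒮), A ∩ {ω | ω.2.1 = s})).toReal := by
          rw [← hAeq]
      _ = (∑ s : 𝒮, μ (A ∩ {ω | ω.2.1 = s})).toReal := by
          rw [measure_biUnion_finset hdisj fun s _ => hA.inter (hSs s)]
      _ = ∑ s : 𝒮, (μ (A ∩ {ω | ω.2.1 = s})).toReal :=
          ENNReal.toReal_sum fun s _ => hμfin _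
  have hπ1 : ∑ s : 𝒮, probS μ s = 1 := by
    have := hsplit univ MeasurableSet.univ
    simp only [univ_inter] at this
    rw [measure_univ, ENNReal.toReal_one] at this
    exact this.symm
  have htot : ∀ k, (μ (memEvent Γfair k)).toReal = b k := by
    intro k
    rw [hsplit _ (hmemMeas k)]
    have : ∀ s : 𝒮, (μ (memEvent Γfair k ∩ {ω | ω.2.1 = s})).toReal = b k * probS μ s := by
      intro s
      have hπne : probS μ s ≠ 0 := (hπ s).ne'
      have hc := key k s
      unfold condProb at hc
      rw [div_eq_iff hπne] at hc
      exact hc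
    rw [Finset.sum_congr rfl fun s _ => this s, ← Finset.mul_sum, hπ1, mul_one]
  refine ⟨key, ?_, ?_⟩
  · intro k s
    rw [key k s, htot k]
  · unfold expSize
    have hcard : ∀ ω : 𝒳 × 𝒮 × Fin K, ((Γfair ω.1 ω.2.1).ncard : ℝ)
        = ∑ k : Fin K, (memEvent Γfair k).indicator (fun _ => (1:ℝ)) ω := by
      intro ω
      have h1 : Γfair ω.1 ω.2.1
          = ↑(Finset.univ.filter fun k => k ∈ Γfair ω.1 ω.2.1) := by
        ext k; simp
      rw [h1, Set.ncard_coe_finset, Finset.card_filter]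
      push_cast
      refine Finset.sum_congr rfl fun k _ => ?_
      simp [Set.indicator_apply, memEvent]
    rw [integral_congr_ae (Filter.Eventually.of_forall hcard)]
    rw [integral_finset_sum _ fun k _ => (integrable_const (1:ℝ)).indicator (hmemMeas k)]
    refine Finset.sum_congr rfl fun k _ => ?_
    rw [← htot k]
    exact integral_indicator_one (hmemMeas k)


end
end

section
/- Assume Assumption 1 (continuity) and fix β ∈ (0,K). Suppose that 0 < F̄_k(G⁻¹(β)) < 1 for every k ∈ [K], and define the size-to-fairness classifier Γ̃_{β2DP}(x,s) := {k ∈ [K] : p_k(x,s) ≥ F̄_{k,s}⁻¹(F̄_k(G⁻¹(β)))}. Then for every k ∈ [K] and s ∈ 𝒮, ℙ(k ∈ Γ̃_{β2DP}(X,S) | S = s) = F̄_k(G⁻¹(β)); in particular Γ̃_{β2DP} is DP-fair and 𝒯(Γ̃_{β2DP}) = β. -/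
open MeasureTheory Set Filter

noncomputable section

private lemma my_ginv_eq (h : ℝ → ℝ) (hc : Continuous h) (u t₁ t₀ : ℝ)
    (h1 : h t₁ ≤ u) (h2 : ∀ t ≤ t₀, u < h t) : h (ginv h u) = u := by
  set S : Set ℝ := {t | h t ≤ u} with hS
  have hne : S.Nonempty := ⟨t₁, h1⟩
  have hbdd : BddBelow S := by
    refine ⟨t₀, fun t ht => ?_⟩
    by_contra hcon
    exact absurd ht (not_le.mpr (h2 t (le_of_not_ge hcon)))
  have hclosed : IsClosed S := isClosed_le hc continuous_const
  have hmem : ginv h u ∈ S := hclosed.csInf_mem hne hbdd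
  have hge : u ≤ h (ginv h u) := by
    have ht : Tendsto h (nhdsWithin (ginv h u) (Iio (ginv h u))) (nhds (h (ginv h u))) :=
      (hc.tendsto _).mono_left nhdsWithin_le_nhds
    refine ge_of_tendsto ht ?_
    filter_upwards [self_mem_nhdsWithin] with t ht'
    by_contra hcon
    push_neg at hcon
    exact absurd (csInf_le hbdd hcon.le) (not_le.mpr ht')
  exact le_antisymm hmem hge

private lemma my_atom_zero {α : Type*} [MeasurableSpace α] (ν : Measure α) [IsFiniteMeasure ν]
    (f : α → ℝ) (hf : Measurable f) (F : ℝ → ℝ)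
    (hF : ∀ t, (ν {x | f x ≤ t}).toReal = F t) (hc : Continuous F) (t : ℝ) :
    ν {x | f x = t} = 0 := by
  have hme : MeasurableSet {x | f x = t} := hf (measurableSet_singleton t)
  have key : ∀ t' < t, (ν {x | f x = t}).toReal ≤ F t - F t' := by
    intro t' ht'
    have hdisj : Disjoint {x | f x ≤ t'} {x | f x = t} := by
      rw [Set.disjoint_left]
      intro x hx1 hx2
      simp only [mem_setOf_eq] at hx1 hx2
      rw [hx2] at hx1; linarith
    have hsub : {x | f x ≤ t'} ∪ {x | f x = t} ⊆ {x | f x ≤ t} := by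
      rintro x (hx | hx) <;> simp only [mem_setOf_eq] at hx ⊢
      · linarith
      · exact hx.le
    have h1 : ν {x | f x ≤ t'} + ν {x | f x = t} ≤ ν {x | f x ≤ t} := by
      rw [← measure_union hdisj hme]
      exact measure_mono hsub
    have h2 := (ENNReal.toReal_le_toReal (by finiteness) (measure_ne_top ν _)).mpr h1
    rw [ENNReal.toReal_add (measure_ne_top ν _) (measure_ne_top ν _), hF, hF] at h2
    linarith
  have hlim : Tendsto (fun t' => F t - F t') (nhdsWithin t (Iio t)) (nhds 0) := by
    have := ((hc.tendsto t).const_sub (F t)).mono_left (nhdsWithin_le_nhds (s := Iio t))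
    simpa using this
  have hle0 : (ν {x | f x = t}).toReal ≤ 0 := by
    refine ge_of_tendsto hlim ?_
    filter_upwards [self_mem_nhdsWithin] with t' ht'
    exact key t' ht'
  have h0 : (ν {x | f x = t}).toReal = 0 := le_antisymm hle0 ENNReal.toReal_nonneg
  rcases (ENNReal.toReal_eq_zero_iff _).mp h0 with h | h
  · exact h
  · exact absurd h (measure_ne_top ν _)

private lemma my_compl_toReal {α : Type*} [MeasurableSpace α] (ν : Measure α)
    [IsFiniteMeasure ν] (f : α → ℝ) (hf : Measurable f) (t : ℝ)
    (h0 : ν {x | f x = t} = 0) :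
    (ν {x | t ≤ f x}).toReal = (ν univ).toReal - (ν {x | f x ≤ t}).toReal := by
  have h1 : {x | t ≤ f x} ∪ {x | f x ≤ t} = univ := by
    ext x; simp [mem_setOf_eq, le_total t (f x)]
  have h2 : {x | t ≤ f x} ∩ {x | f x ≤ t} = {x | f x = t} := by
    ext x
    simp only [mem_inter_iff, mem_setOf_eq]
    constructor
    · rintro ⟨ha, hb⟩; linarith
    · intro h; rw [h]; exact ⟨le_refl t, le_refl t⟩
  have h3 := measure_union_add_inter (μ := ν) {x | t ≤ f x}
    (show MeasurableSet {x | f x ≤ t} from hf measurableSet_Iic)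
  rw [h1, h2, h0, add_zero] at h3
  have h4 := congrArg ENNReal.toReal h3
  rw [ENNReal.toReal_add (measure_ne_top ν _) (measure_ne_top ν _)] at h4
  linarith

private lemma my_partition {𝒳 𝒮 : Type*} [MeasurableSpace 𝒳] [MeasurableSpace 𝒮]
    [MeasurableSingletonClass 𝒮] [Fintype 𝒮] {K : ℕ}
    (μ : Measure (𝒳 × 𝒮 × Fin K)) [IsFiniteMeasure μ]
    (A : Set (𝒳 × 𝒮 × Fin K)) (hA : MeasurableSet A) :
    (μ A).toReal = ∑ s : 𝒮, (μ (A ∩ {ω | ω.2.1 = s})).toReal := by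
  have hS : ∀ s : 𝒮, MeasurableSet {ω : 𝒳 × 𝒮 × Fin K | ω.2.1 = s} := fun s =>
    (measurable_fst.comp measurable_snd) (measurableSet_singleton s)
  have hU : ⋃ s : 𝒮, (A ∩ {ω : 𝒳 × 𝒮 × Fin K | ω.2.1 = s}) = A := by
    ext ω; simp [mem_iUnion]
  have hd : Pairwise (Function.onFun Disjoint
      fun s => A ∩ {ω : 𝒳 × 𝒮 × Fin K | ω.2.1 = s}) := by
    intro s s' hss
    simp only [Function.onFun, Set.disjoint_left]
    rintro ω ⟨-, h1⟩ ⟨-, h2⟩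
    simp only [mem_setOf_eq] at h1 h2
    exact hss (h1 ▸ h2 ▸ rfl)
  conv_lhs => rw [← hU]
  rw [measure_iUnion hd (fun s => hA.inter (hS s)), tsum_fintype,
    ENNReal.toReal_sum (fun s _ => measure_ne_top μ _)]

theorem statement10
    {𝒳 𝒮 : Type*} [MeasurableSpace 𝒳] [MeasurableSpace 𝒮] [MeasurableSingletonClass 𝒮]
    [Fintype 𝒮] [Nonempty 𝒮] {K : ℕ} (hK : 2 ≤ K)
    (μ : Measure (𝒳 × 𝒮 × Fin K)) (hμ : IsProbabilityMeasure μ)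
    (hπ : ∀ s : 𝒮, 0 < probS μ s)
    (p : Fin K → 𝒳 → 𝒮 → ℝ)
    (hpmeas : ∀ k, Measurable fun q : 𝒳 × 𝒮 => p k q.1 q.2)
    (hp01 : ∀ k x s, p k x s ∈ Icc (0:ℝ) 1)
    (hpsum : ∀ x s, ∑ k : Fin K, p k x s = 1)
    (hlink : ∀ (k : Fin K) (A : Set (𝒳 × 𝒮)), MeasurableSet A →
      (μ {ω | ω.2.2 = k ∧ (ω.1, ω.2.1) ∈ A}).toReal
        = ∫ ω in {ω : 𝒳 × 𝒮 × Fin K | (ω.1, ω.2.1) ∈ A}, p k ω.1 ω.2.1 ∂μ)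
    (β : ℝ) (hβ0 : 0 < β) (hβK : β < (K : ℝ))
    (hA1 : Assumption1 μ p)
    (hb : ∀ k : Fin K, 1 - Fk μ p k (ginv (Gfun μ p) β) ∈ Ioo (0:ℝ) 1) :
    ∀ Γ : 𝒳 → 𝒮 → Set (Fin K),
      (∀ x s, Γ x s = {k : Fin K | ginv (fun t => 1 - Fks μ p k s t)
          (1 - Fk μ p k (ginv (Gfun μ p) β)) ≤ p k x s}) →
      (∀ (k : Fin K) (s : 𝒮),
        condProb μ (memEvent Γ k) s = 1 - Fk μ p k (ginv (Gfun μ p) β)) ∧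
      DPfair μ Γ ∧ expSize μ Γ = β := by
  classical
  intro Γ hΓ
  set τ : ℝ := ginv (Gfun μ p) β with hτdef
  set thr : Fin K → 𝒮 → ℝ :=
    fun k s => ginv (fun t => 1 - Fks μ p k s t) (1 - Fk μ p k τ) with hthrdef
  set b : Fin K → ℝ := fun k => 1 - Fk μ p k τ with hbdef
  have hπne : ∀ s, probS μ s ≠ 0 := fun s => (hπ s).ne'
  have hpm : ∀ k, Measurable fun ω : 𝒳 × 𝒮 × Fin K => p k ω.1 ω.2.1 :=
    fun k => (hpmeas k).comp (measurable_fst.prodMk (measurable_fst.comp measurable_snd))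
  have hmle : ∀ k t, MeasurableSet {ω : 𝒳 × 𝒮 × Fin K | p k ω.1 ω.2.1 ≤ t} :=
    fun k t => (hpm k) measurableSet_Iic
  have hmge : ∀ k (c : ℝ), MeasurableSet {ω : 𝒳 × 𝒮 × Fin K | c ≤ p k ω.1 ω.2.1} :=
    fun k c => (hpm k) measurableSet_Ici
  -- restricted measures
  have hν : ∀ (s : 𝒮) (A : Set (𝒳 × 𝒮 × Fin K)), MeasurableSet A →
      (μ.restrict {ω : 𝒳 × 𝒮 × Fin K | ω.2.1 = s}) A = μ (A ∩ {ω | ω.2.1 = s}) :=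
    fun s A hA => Measure.restrict_apply hA
  -- Fks in terms of restricted measure
  have hFks_eq : ∀ k s t,
      ((μ.restrict {ω : 𝒳 × 𝒮 × Fin K | ω.2.1 = s}) {ω | p k ω.1 ω.2.1 ≤ t}).toReal
        = probS μ s * Fks μ p k s t := by
    intro k s t
    rw [hν s _ (hmle k t)]
    unfold Fks condProb
    rw [mul_div_cancel₀ _ (hπne s)]
  -- extreme values of Fks
  have hFks_lo : ∀ k s t, t < 0 → Fks μ p k s t = 0 := by
    intro k s t ht
    have he : {ω : 𝒳 × 𝒮 × Fin K | p k ω.1 ω.2.1 ≤ t} = (∅ : Set (𝒳 × 𝒮 × Fin K)) := by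
      ext ω
      simp only [mem_setOf_eq, mem_empty_iff_false, iff_false, not_le]
      exact lt_of_lt_of_le ht (hp01 k ω.1 ω.2.1).1
    unfold Fks condProb
    rw [he, empty_inter, measure_empty]
    simp
  have hFks_hi : ∀ k s, Fks μ p k s 1 = 1 := by
    intro k s
    have he : {ω : 𝒳 × 𝒮 × Fin K | p k ω.1 ω.2.1 ≤ 1} = univ := by
      ext ω
      simp only [mem_setOf_eq, mem_univ, iff_true]
      exact (hp01 k ω.1 ω.2.1).2
    unfold Fks condProb
    rw [he, univ_inter]
    exact div_self (hπne s)
  -- the threshold attains the right level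
  have hthr : ∀ k s, 1 - Fks μ p k s (thr k s) = b k := by
    intro k s
    refine my_ginv_eq _ (continuous_const.sub (hA1 k s)) (b k) 1 (-1) ?_ ?_
    · simp only [hbdef]
      show 1 - Fks μ p k s 1 ≤ 1 - Fk μ p k τ
      rw [hFks_hi k s]
      linarith [(hb k).1]
    · intro t ht
      simp only [hbdef]
      show 1 - Fk μ p k τ < 1 - Fks μ p k s t
      rw [hFks_lo k s t (by linarith)]
      linarith [(hb k).2]
  -- no atoms
  have hatom : ∀ k s,
      (μ.restrict {ω : 𝒳 × 𝒮 × Fin K | ω.2.1 = s}) {ω | p k ω.1 ω.2.1 = thr k s} = 0 := by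
    intro k s
    exact my_atom_zero _ _ (hpm k) (fun t => probS μ s * Fks μ p k s t)
      (fun t => hFks_eq k s t) (continuous_const.mul (hA1 k s)) (thr k s)
  have hνuniv : ∀ s : 𝒮,
      ((μ.restrict {ω : 𝒳 × 𝒮 × Fin K | ω.2.1 = s}) univ).toReal = probS μ s := by
    intro s
    rw [Measure.restrict_apply_univ]
    rfl
  -- the key computation
  have hkey : ∀ k s,
      (μ ({ω : 𝒳 × 𝒮 × Fin K | thr k s ≤ p k ω.1 ω.2.1} ∩ {ω | ω.2.1 = s})).toReal
        = probS μ s * b k := by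
    intro k s
    rw [← hν s _ (hmge k (thr k s))]
    rw [my_compl_toReal _ _ (hpm k) (thr k s) (hatom k s), hνuniv, hFks_eq]
    rw [← hthr k s]
    ring
  -- conditional probabilities
  have hcond : ∀ k s, condProb μ (memEvent Γ k) s = b k := by
    intro k s
    have hset : memEvent Γ k ∩ {ω : 𝒳 × 𝒮 × Fin K | ω.2.1 = s}
        = {ω : 𝒳 × 𝒮 × Fin K | thr k s ≤ p k ω.1 ω.2.1} ∩ {ω | ω.2.1 = s} := by
      ext ω
      obtain ⟨x, s', y⟩ := ω
      simp only [memEvent, hΓ, hthrdef, mem_inter_iff, mem_setOf_eq]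
      constructor
      · rintro ⟨h1, rfl⟩
        exact ⟨h1, rfl⟩
      · rintro ⟨h1, rfl⟩
        exact ⟨h1, rfl⟩
    unfold condProb
    rw [hset, hkey k s, mul_comm, mul_div_assoc, div_self (hπne s), mul_one]
  -- measurability of memEvent
  have hmemset : ∀ k, memEvent Γ k = {ω : 𝒳 × 𝒮 × Fin K | thr k ω.2.1 ≤ p k ω.1 ω.2.1} := by
    intro k
    ext ω
    simp [memEvent, hΓ, hthrdef]
  have hmemmeas : ∀ k, MeasurableSet (memEvent Γ k) := by
    intro k
    rw [hmemset k]
    have hthrm : Measurable fun ω : 𝒳 × 𝒮 × Fin K => thr k ω.2.1 :=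
      (Measurable.of_discrete (f := thr k)).comp (measurable_fst.comp measurable_snd)
    have hm : Measurable fun ω : 𝒳 × 𝒮 × Fin K => p k ω.1 ω.2.1 - thr k ω.2.1 :=
      (hpm k).sub hthrm
    have := hm (measurableSet_Ici (a := (0 : ℝ)))
    convert this using 1
    ext ω
    simp [sub_nonneg]
  -- sum of probS is 1
  have hπsum : ∑ s : 𝒮, probS μ s = 1 := by
    have h := my_partition μ univ MeasurableSet.univ
    simp only [univ_inter, measure_univ, ENNReal.toReal_one] at h
    exact h.symm
  -- total probability of memEvent
  have hmu : ∀ k, (μ (memEvent Γ k)).toReal = b k := by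
    intro k
    rw [my_partition μ _ (hmemmeas k)]
    have hterm : ∀ s : 𝒮, (μ (memEvent Γ k ∩ {ω | ω.2.1 = s})).toReal = probS μ s * b k := by
      intro s
      have := hcond k s
      unfold condProb at this
      rw [← this, mul_comm]
      rw [div_mul_cancel₀ _ (hπne s)]
    rw [Finset.sum_congr rfl (fun s _ => hterm s), ← Finset.sum_mul, hπsum, one_mul]
  -- cdf Fk as mixture, continuity
  have hFk_eq : ∀ k t, Fk μ p k t = ∑ s : 𝒮, probS μ s * Fks μ p k s t := by
    intro k t
    unfold Fk
    rw [my_partition μ _ (hmle k t)]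
    refine Finset.sum_congr rfl fun s _ => ?_
    unfold Fks condProb
    rw [mul_div_cancel₀ _ (hπne s)]
  have hFkcont : ∀ k, Continuous (Fk μ p k) := by
    intro k
    have : Fk μ p k = fun t => ∑ s : 𝒮, probS μ s * Fks μ p k s t := funext (hFk_eq k)
    rw [this]
    exact continuous_finset_sum _ fun s _ => continuous_const.mul (hA1 k s)
  have hGcont : Continuous (Gfun μ p) := by
    unfold Gfun
    exact continuous_finset_sum _ fun k _ => continuous_const.sub (hFkcont k)
  -- extreme values of Fk
  have hFk_hi : ∀ k, Fk μ p k 1 = 1 := by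
    intro k
    have he : {ω : 𝒳 × 𝒮 × Fin K | p k ω.1 ω.2.1 ≤ 1} = univ := by
      ext ω
      simp only [mem_setOf_eq, mem_univ, iff_true]
      exact (hp01 k ω.1 ω.2.1).2
    unfold Fk
    rw [he, measure_univ, ENNReal.toReal_one]
  have hFk_lo : ∀ k t, t < 0 → Fk μ p k t = 0 := by
    intro k t ht
    have he : {ω : 𝒳 × 𝒮 × Fin K | p k ω.1 ω.2.1 ≤ t} = (∅ : Set (𝒳 × 𝒮 × Fin K)) := by
      ext ω
      simp only [mem_setOf_eq, mem_empty_iff_false, iff_false, not_le]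
      exact lt_of_lt_of_le ht (hp01 k ω.1 ω.2.1).1
    unfold Fk
    rw [he, measure_empty]
    simp
  -- G at its generalized inverse
  have hGτ : Gfun μ p τ = β := by
    refine my_ginv_eq _ hGcont β 1 (-1) ?_ ?_
    · unfold Gfun
      rw [Finset.sum_congr rfl fun k _ => by rw [hFk_hi k]]
      simpa using hβ0.le
    · intro t ht
      unfold Gfun
      rw [Finset.sum_congr rfl fun k _ => by rw [hFk_lo k t (by linarith)]]
      simpa using hβK
  have hsum_b : ∑ k : Fin K, b k = β := by
    rw [← hGτ]
    rfl
  refine ⟨hcond, fun k s => by rw [hcond k s, hmu k], ?_⟩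
  -- expected size
  have hintegrand : (fun ω : 𝒳 × 𝒮 × Fin K => ((Γ ω.1 ω.2.1).ncard : ℝ))
      = fun ω => ∑ k : Fin K, (memEvent Γ k).indicator (fun _ => (1 : ℝ)) ω := by
    funext ω
    have h1 : ∀ k : Fin K, (memEvent Γ k).indicator (fun _ => (1 : ℝ)) ω
        = if k ∈ Γ ω.1 ω.2.1 then 1 else 0 := by
      intro k
      by_cases h : k ∈ Γ ω.1 ω.2.1 <;> simp [Set.indicator, memEvent, h]
    rw [Finset.sum_congr rfl fun k _ => h1 k, Finset.sum_boole]
    have hfin : (Γ ω.1 ω.2.1).Finite := Set.toFinite _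
    have hfil : hfin.toFinset = Finset.univ.filter (· ∈ Γ ω.1 ω.2.1) := by
      ext k
      simp [Set.Finite.mem_toFinset, Set.mem_setOf_eq]
    rw [Set.ncard_eq_toFinset_card _ hfin, hfil]
  have hint : ∀ k : Fin K,
      Integrable ((memEvent Γ k).indicator (fun _ => (1 : ℝ))) μ := by
    intro k
    rw [integrable_indicator_iff (hmemmeas k)]
    exact (integrableOn_const_iff (C := (1 : ℝ))).mpr (Or.inr (measure_lt_top μ _))
  unfold expSize
  rw [hintegrand, integral_finset_sum _ fun k _ => hint k]
  have hii : ∀ k : Fin K, ∫ ω, (memEvent Γ k).indicator (fun _ => (1 : ℝ)) ω ∂μ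
      = (μ (memEvent Γ k)).toReal := by
    intro k
    have := integral_indicator_one (μ := μ) (hmemmeas k)
    simpa [Pi.one_def, Measure.real_def] using this
  rw [Finset.sum_congr rfl fun k _ => by rw [hii k, hmu k]]
  exact hsum_b

end
end

section
/- Assume Assumption 1 (continuity) and fix β ∈ (0,K). Define Γ̃(x,s) := {k ∈ [K] : p_k(x,s) ≥ G⁻¹(β)}. Then 𝒯(Γ̃) = β and Γ̃ minimizes the risk under the expected size constraint: R(Γ̃) ≤ R(Γ) for every set-valued classifier Γ ∈ 𝚪 with 𝒯(Γ) ≤ β. Moreover, ℙ(k ∈ Γ̃(X,S)) = F̄_k(G⁻¹(β)) for every k ∈ [K]. -/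
open MeasureTheory Set Filter

noncomputable section

section AuxLemmas
set_option linter.unusedSectionVars false

variable {𝒳 𝒮 : Type*} [MeasurableSpace 𝒳] [MeasurableSpace 𝒮] [MeasurableSingletonClass 𝒮]
  [Fintype 𝒮] {K : ℕ}

lemma memEvent_measurable {Γ : 𝒳 → 𝒮 → Set (Fin K)} (hΓ : IsClassifier Γ) (k : Fin K) :
    MeasurableSet (memEvent Γ k) := by
  have h : memEvent Γ k = (fun ω : 𝒳 × 𝒮 × Fin K => (ω.1, ω.2.1)) ⁻¹' {q | k ∈ Γ q.1 q.2} := rfl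
  rw [h]
  exact (measurable_fst.prodMk measurable_snd.fst) (hΓ k)

lemma ncard_eq_sum_ind (A : Set (Fin K)) :
    ((A.ncard : ℝ)) = ∑ k : Fin K, A.indicator (fun _ => (1:ℝ)) k := by
  classical
  simp only [Set.indicator_apply]
  rw [Finset.sum_boole, Set.ncard_eq_toFinset_card' A]
  norm_cast
  congr 1
  ext k
  simp

lemma expSize_eq_sum (μ : Measure (𝒳 × 𝒮 × Fin K)) [IsProbabilityMeasure μ]
    {Γ : 𝒳 → 𝒮 → Set (Fin K)} (hΓ : IsClassifier Γ) :
    expSize μ Γ = ∑ k : Fin K, (μ (memEvent Γ k)).toReal := by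
  classical
  have h1 : ∀ ω : 𝒳 × 𝒮 × Fin K, ((Γ ω.1 ω.2.1).ncard : ℝ)
      = ∑ k : Fin K, (memEvent Γ k).indicator (fun _ => (1:ℝ)) ω := by
    intro ω
    rw [ncard_eq_sum_ind]
    rfl
  rw [expSize]
  simp_rw [h1]
  rw [integral_finset_sum _ (fun k _ => (integrable_const (1:ℝ)).indicator
    (memEvent_measurable hΓ k))]
  exact Finset.sum_congr rfl fun k _ => integral_indicator_one (memEvent_measurable hΓ k)

lemma risk_eq_one_sub (μ : Measure (𝒳 × 𝒮 × Fin K)) [IsProbabilityMeasure μ]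
    (p : Fin K → 𝒳 → 𝒮 → ℝ)
    (hlink : ∀ (k : Fin K) (A : Set (𝒳 × 𝒮)), MeasurableSet A →
      (μ {ω | ω.2.2 = k ∧ (ω.1, ω.2.1) ∈ A}).toReal
        = ∫ ω in {ω : 𝒳 × 𝒮 × Fin K | (ω.1, ω.2.1) ∈ A}, p k ω.1 ω.2.1 ∂μ)
    {Γ : 𝒳 → 𝒮 → Set (Fin K)} (hΓ : IsClassifier Γ) :
    risk μ Γ = 1 - ∑ k : Fin K, ∫ ω in memEvent Γ k, p k ω.1 ω.2.1 ∂μ := by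
  classical
  set B : Fin K → Set (𝒳 × 𝒮 × Fin K) := fun k => {ω | ω.2.2 = k} ∩ memEvent Γ k with hB
  have hBmeas : ∀ k, MeasurableSet (B k) := fun k =>
    ((measurable_snd.snd (MeasurableSet.singleton k))).inter (memEvent_measurable hΓ k)
  have hU : {ω : 𝒳 × 𝒮 × Fin K | ω.2.2 ∉ Γ ω.1 ω.2.1} = (⋃ k ∈ Finset.univ, B k)ᶜ := by
    ext ω
    simp only [Set.mem_setOf_eq, Set.mem_compl_iff, Set.mem_iUnion, Finset.mem_univ,
      Set.mem_inter_iff, hB, true_and, exists_prop, memEvent]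
    constructor
    · rintro h ⟨k, hk, hk2⟩; exact h (hk ▸ hk2)
    · intro h hc; exact h ⟨ω.2.2, rfl, hc⟩
  have hdisj : ((Finset.univ : Finset (Fin K)) : Set (Fin K)).PairwiseDisjoint B := by
    intro i _ j _ hij
    simp only [Function.onFun]
    refine Set.disjoint_left.2 fun ω hωi hωj => hij ?_
    exact hωi.1.symm.trans hωj.1
  have hmU : μ (⋃ k ∈ Finset.univ, B k) = ∑ k : Fin K, μ (B k) :=
    measure_biUnion_finset hdisj fun k _ => hBmeas k
  have hmeasU : MeasurableSet (⋃ k ∈ Finset.univ, B k) :=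
    MeasurableSet.biUnion (Finset.univ : Finset (Fin K)).countable_toSet fun k _ => hBmeas k
  have hle : μ (⋃ k ∈ Finset.univ, B k) ≤ 1 := prob_le_one
  rw [risk, hU, prob_compl_eq_one_sub hmeasU,
    ENNReal.toReal_sub_of_le hle ENNReal.one_ne_top, ENNReal.toReal_one, hmU,
    ENNReal.toReal_sum (fun k _ => measure_ne_top μ _)]
  congr 1
  refine Finset.sum_congr rfl fun k _ => ?_
  have h1 : B k = {ω : 𝒳 × 𝒮 × Fin K | ω.2.2 = k ∧ (ω.1, ω.2.1) ∈ {q : 𝒳 × 𝒮 | k ∈ Γ q.1 q.2}} := by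
    ext ω; simp [hB, memEvent, Set.mem_setOf_eq, Set.mem_inter_iff]
  have h2 : {ω : 𝒳 × 𝒮 × Fin K | (ω.1, ω.2.1) ∈ {q : 𝒳 × 𝒮 | k ∈ Γ q.1 q.2}} = memEvent Γ k := rfl
  rw [h1, hlink k _ (hΓ k), h2]

/-- If the cdf of `f` is continuous then `f` has no atoms. -/
lemma atom_zero {α : Type*} [MeasurableSpace α] (ν : Measure α) [IsProbabilityMeasure ν]
    (f : α → ℝ) (hf : Measurable f)
    (hcont : Continuous fun t => (ν {a | f a ≤ t}).toReal) (c : ℝ) :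
    ν {a | f a = c} = 0 := by
  set F : ℝ → ℝ := fun t => (ν {a | f a ≤ t}).toReal with hF
  have key : ∀ n : ℕ, (ν {a | f a = c}).toReal ≤ F c - F (c - 1/(n+1)) := by
    intro n
    have hsub : {a | f a = c} ⊆ {a | f a ≤ c} \ {a | f a ≤ c - 1/(n+1)} := by
      intro a ha
      simp only [Set.mem_setOf_eq] at ha
      constructor
      · exact le_of_eq ha
      · simp only [Set.mem_setOf_eq, ha, not_le]
        have : (0:ℝ) < 1/(n+1) := by positivity
        linarith
    have hdiff : ν ({a | f a ≤ c} \ {a | f a ≤ c - 1/(n+1)}) =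
        ν {a | f a ≤ c} - ν {a | f a ≤ c - 1/(n+1)} := by
      refine measure_diff (fun a ha => ?_) ((hf measurableSet_Iic).nullMeasurableSet)
        (measure_ne_top ν _)
      simp only [Set.mem_setOf_eq] at ha ⊢
      have : (0:ℝ) < 1/(n+1) := by positivity
      linarith
    calc (ν {a | f a = c}).toReal ≤ (ν ({a | f a ≤ c} \ {a | f a ≤ c - 1/(n+1)})).toReal := by
          exact ENNReal.toReal_mono (measure_ne_top ν _) (measure_mono hsub)
      _ = F c - F (c - 1/(n+1)) := by
          rw [hdiff]
          have hmono : ν {a | f a ≤ c - 1/(n+1)} ≤ ν {a | f a ≤ c} := by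
            refine measure_mono fun a ha => ?_
            simp only [Set.mem_setOf_eq] at ha ⊢
            have : (0:ℝ) < 1/(n+1) := by positivity
            linarith
          rw [ENNReal.toReal_sub_of_le hmono (measure_ne_top ν _)]
  have htend : Filter.Tendsto (fun n : ℕ => F c - F (c - 1/(n+1))) Filter.atTop (nhds 0) := by
    have h1 : Filter.Tendsto (fun n : ℕ => c - 1/(n+1)) Filter.atTop (nhds c) := by
      have := tendsto_one_div_add_atTop_nhds_zero_nat (𝕜 := ℝ)
      have := (tendsto_const_nhds (x := c) (f := Filter.atTop (α := ℕ))).sub this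
      simpa using this
    have h2 : Filter.Tendsto (fun n : ℕ => F (c - 1/(n+1))) Filter.atTop (nhds (F c)) :=
      (hcont.tendsto c).comp h1
    have := (tendsto_const_nhds (x := F c) (f := Filter.atTop (α := ℕ))).sub h2
    simpa using this
  have hle : (ν {a | f a = c}).toReal ≤ 0 :=
    ge_of_tendsto htend (Filter.Eventually.of_forall key)
  have h0 : (ν {a | f a = c}).toReal = 0 := le_antisymm hle ENNReal.toReal_nonneg
  exact (ENNReal.toReal_eq_zero_iff _).1 h0 |>.resolve_right (measure_ne_top ν _)


lemma Fk_eq_sum (μ : Measure (𝒳 × 𝒮 × Fin K)) [IsProbabilityMeasure μ]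
    (hπ : ∀ s : 𝒮, 0 < probS μ s)
    (p : Fin K → 𝒳 → 𝒮 → ℝ) (hpmeas : ∀ k, Measurable fun q : 𝒳 × 𝒮 => p k q.1 q.2)
    (k : Fin K) (t : ℝ) :
    Fk μ p k t = ∑ s : 𝒮, probS μ s * Fks μ p k s t := by
  classical
  have hA : MeasurableSet {ω : 𝒳 × 𝒮 × Fin K | p k ω.1 ω.2.1 ≤ t} :=
    ((hpmeas k).comp (measurable_fst.prodMk measurable_snd.fst)) measurableSet_Iic
  have hSs : ∀ s : 𝒮, MeasurableSet {ω : 𝒳 × 𝒮 × Fin K | ω.2.1 = s} :=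
    fun s => measurable_snd.fst (MeasurableSet.singleton s)
  have hU : {ω : 𝒳 × 𝒮 × Fin K | p k ω.1 ω.2.1 ≤ t}
      = ⋃ s ∈ (Finset.univ : Finset 𝒮),
          ({ω : 𝒳 × 𝒮 × Fin K | p k ω.1 ω.2.1 ≤ t} ∩ {ω | ω.2.1 = s}) := by
    ext ω; simp
  have hdisj : ((Finset.univ : Finset 𝒮) : Set 𝒮).PairwiseDisjoint
      (fun s => {ω : 𝒳 × 𝒮 × Fin K | p k ω.1 ω.2.1 ≤ t} ∩ {ω | ω.2.1 = s}) := by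
    intro i _ j _ hij
    simp only [Function.onFun]
    exact Set.disjoint_left.2 fun ω hωi hωj => hij (hωi.2.symm.trans hωj.2)
  rw [Fk, hU, measure_biUnion_finset hdisj (fun s _ => hA.inter (hSs s)),
    ENNReal.toReal_sum (fun s _ => measure_ne_top μ _)]
  refine Finset.sum_congr rfl fun s _ => ?_
  rw [Fks, condProb, mul_comm, div_mul_cancel₀ _ (hπ s).ne']

lemma Fk_cont (μ : Measure (𝒳 × 𝒮 × Fin K)) [IsProbabilityMeasure μ]
    (hπ : ∀ s : 𝒮, 0 < probS μ s)
    (p : Fin K → 𝒳 → 𝒮 → ℝ) (hpmeas : ∀ k, Measurable fun q : 𝒳 × 𝒮 => p k q.1 q.2)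
    (hA1 : Assumption1 μ p) (k : Fin K) :
    Continuous fun t => Fk μ p k t := by
  have h : (fun t => Fk μ p k t) = fun t => ∑ s : 𝒮, probS μ s * Fks μ p k s t :=
    funext (Fk_eq_sum μ hπ p hpmeas k)
  rw [h]
  exact continuous_finset_sum _ fun s _ => continuous_const.mul (hA1 k s)

lemma key_ineq {α : Type*} [MeasurableSpace α] (ν : Measure α) [IsProbabilityMeasure ν]
    (f : α → ℝ) (hf : Measurable f) (hf01 : ∀ a, f a ∈ Set.Icc (0:ℝ) 1)
    (T : ℝ) (E' : Set α) (hE' : MeasurableSet E') :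
    T * ((ν {a | T ≤ f a}).toReal - (ν E').toReal)
      ≤ (∫ a in {a | T ≤ f a}, f a ∂ν) - ∫ a in E', f a ∂ν := by
  set E : Set α := {a | T ≤ f a} with hEdef
  have hE : MeasurableSet E := hf measurableSet_Ici
  have hfint : Integrable f ν := by
    refine Integrable.mono' (integrable_const (1:ℝ)) hf.aestronglyMeasurable
      (Filter.Eventually.of_forall fun a => ?_)
    rw [Real.norm_eq_abs, abs_le]
    exact ⟨le_trans (by norm_num) (hf01 a).1, (hf01 a).2⟩
  have hgi : Integrable (fun a => E.indicator f a - E'.indicator f a) ν :=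
    (hfint.indicator hE).sub (hfint.indicator hE')
  have hhi : Integrable (fun a =>
      T * (E.indicator (fun _ => (1:ℝ)) a - E'.indicator (fun _ => (1:ℝ)) a)) ν :=
    ((((integrable_const (1:ℝ)).indicator hE).sub
      ((integrable_const (1:ℝ)).indicator hE'))).const_mul T
  have hpt : ∀ a, T * (E.indicator (fun _ => (1:ℝ)) a - E'.indicator (fun _ => (1:ℝ)) a)
      ≤ E.indicator f a - E'.indicator f a := by
    intro a
    by_cases h1 : a ∈ E <;> by_cases h2 : a ∈ E'
    · simp [Set.indicator_of_mem, h1, h2]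
    · have hTa : T ≤ f a := h1
      simp only [Set.indicator_of_mem h1, Set.indicator_of_notMem h2]
      linarith
    · have hTa : f a < T := not_le.1 h1
      simp only [Set.indicator_of_notMem h1, Set.indicator_of_mem h2]
      linarith
    · simp [Set.indicator_of_notMem, h1, h2]
  have hmono := integral_mono hhi hgi hpt
  have e1 : ∫ a, E.indicator (fun _ => (1:ℝ)) a ∂ν = (ν E).toReal := integral_indicator_one hE
  have e2 : ∫ a, E'.indicator (fun _ => (1:ℝ)) a ∂ν = (ν E').toReal := integral_indicator_one hE'
  calc T * ((ν E).toReal - (ν E').toReal)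
      = ∫ a, T * (E.indicator (fun _ => (1:ℝ)) a - E'.indicator (fun _ => (1:ℝ)) a) ∂ν := by
        rw [integral_const_mul,
          integral_sub ((integrable_const (1:ℝ)).indicator hE)
            ((integrable_const (1:ℝ)).indicator hE'), e1, e2]
    _ ≤ ∫ a, (E.indicator f a - E'.indicator f a) ∂ν := hmono
    _ = (∫ a in E, f a ∂ν) - ∫ a in E', f a ∂ν := by
        rw [integral_sub (hfint.indicator hE) (hfint.indicator hE'),
          integral_indicator hE, integral_indicator hE']

end AuxLemmas
theorem statement11
    {𝒳 𝒮 : Type*} [MeasurableSpace 𝒳] [MeasurableSpace 𝒮] [MeasurableSingletonClass 𝒮]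
    [Fintype 𝒮] [Nonempty 𝒮] {K : ℕ} (hK : 2 ≤ K)
    (μ : Measure (𝒳 × 𝒮 × Fin K)) (hμ : IsProbabilityMeasure μ)
    (hπ : ∀ s : 𝒮, 0 < probS μ s)
    (p : Fin K → 𝒳 → 𝒮 → ℝ)
    (hpmeas : ∀ k, Measurable fun q : 𝒳 × 𝒮 => p k q.1 q.2)
    (hp01 : ∀ k x s, p k x s ∈ Icc (0:ℝ) 1)
    (hpsum : ∀ x s, ∑ k : Fin K, p k x s = 1)
    (hlink : ∀ (k : Fin K) (A : Set (𝒳 × 𝒮)), MeasurableSet A →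
      (μ {ω | ω.2.2 = k ∧ (ω.1, ω.2.1) ∈ A}).toReal
        = ∫ ω in {ω : 𝒳 × 𝒮 × Fin K | (ω.1, ω.2.1) ∈ A}, p k ω.1 ω.2.1 ∂μ)
    (β : ℝ) (hβ0 : 0 < β) (hβK : β < (K : ℝ))
    (hA1 : Assumption1 μ p) :
    ∀ Γt : 𝒳 → 𝒮 → Set (Fin K),
      (∀ x s, Γt x s = {k : Fin K | ginv (Gfun μ p) β ≤ p k x s}) →
      expSize μ Γt = β ∧
      (∀ Γ : 𝒳 → 𝒮 → Set (Fin K), IsClassifier Γ → expSize μ Γ ≤ β →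
        risk μ Γt ≤ risk μ Γ) ∧
      (∀ k : Fin K, (μ (memEvent Γt k)).toReal = 1 - Fk μ p k (ginv (Gfun μ p) β)) := by
  intro Γt hΓt
  set T : ℝ := ginv (Gfun μ p) β with hTdef
  have hpm : ∀ k : Fin K, Measurable fun ω : 𝒳 × 𝒮 × Fin K => p k ω.1 ω.2.1 :=
    fun k => (hpmeas k).comp (measurable_fst.prodMk measurable_snd.fst)
  have hFkcont : ∀ k, Continuous fun t => Fk μ p k t :=
    fun k => Fk_cont μ hπ p hpmeas hA1 k
  have hGcont : Continuous (Gfun μ p) := by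
    have h : Gfun μ p = fun t => ∑ k : Fin K, (1 - Fk μ p k t) := rfl
    rw [h]
    exact continuous_finset_sum _ fun k _ => continuous_const.sub (hFkcont k)
  have hFk0 : ∀ (k : Fin K) (t : ℝ), t < 0 → Fk μ p k t = 0 := by
    intro k t ht
    have h : {ω : 𝒳 × 𝒮 × Fin K | p k ω.1 ω.2.1 ≤ t} = ∅ := by
      ext ω
      simp only [Set.mem_setOf_eq, Set.mem_empty_iff_false, iff_false, not_le]
      exact lt_of_lt_of_le ht (hp01 k ω.1 ω.2.1).1
    rw [Fk, h, measure_empty]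
    simp
  have hFk1 : ∀ k : Fin K, Fk μ p k 1 = 1 := by
    intro k
    have h : {ω : 𝒳 × 𝒮 × Fin K | p k ω.1 ω.2.1 ≤ 1} = Set.univ := by
      ext ω; simp [(hp01 k ω.1 ω.2.1).2]
    rw [Fk, h, measure_univ, ENNReal.toReal_one]
  have hGneg : ∀ t : ℝ, t < 0 → Gfun μ p t = K := by
    intro t ht
    rw [Gfun]
    simp [hFk0 _ t ht]
  have hG1 : Gfun μ p 1 = 0 := by
    rw [Gfun]
    simp [hFk1]
  have hne : Set.Nonempty {t : ℝ | Gfun μ p t ≤ β} := ⟨1, by simp [hG1, hβ0.le]⟩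
  have hlb : ∀ t ∈ {t : ℝ | Gfun μ p t ≤ β}, (0:ℝ) ≤ t := by
    intro t ht
    by_contra hlt
    push_neg at hlt
    rw [Set.mem_setOf_eq, hGneg t hlt] at ht
    linarith
  have hbdd : BddBelow {t : ℝ | Gfun μ p t ≤ β} := ⟨0, hlb⟩
  have hT0 : 0 ≤ T := le_csInf hne hlb
  have hTmem : Gfun μ p T ≤ β := by
    have hclosed : IsClosed {t : ℝ | Gfun μ p t ≤ β} := isClosed_le hGcont continuous_const
    exact hclosed.csInf_mem hne hbdd
  have hTge : β ≤ Gfun μ p T := by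
    have h1 : Filter.Tendsto (fun n : ℕ => T - 1/(n+1)) Filter.atTop (nhds T) := by
      have h := (tendsto_const_nhds (x := T)
        (f := Filter.atTop (α := ℕ))).sub (tendsto_one_div_add_atTop_nhds_zero_nat (𝕜 := ℝ))
      simpa using h
    have h2 : Filter.Tendsto (fun n : ℕ => Gfun μ p (T - 1/(n+1))) Filter.atTop
        (nhds (Gfun μ p T)) := (hGcont.tendsto T).comp h1
    refine ge_of_tendsto h2 (Filter.Eventually.of_forall fun n => ?_)
    by_contra hc
    push_neg at hc
    have hmem : T - 1/(n+1) ∈ {t : ℝ | Gfun μ p t ≤ β} := hc.le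
    have h3 : T ≤ T - 1/(n+1) := csInf_le hbdd hmem
    have h4 : (0:ℝ) < 1/(n+1) := by positivity
    linarith
  have hGT : Gfun μ p T = β := le_antisymm hTmem hTge
  have hΓtcl : IsClassifier Γt := by
    intro k
    have h : {q : 𝒳 × 𝒮 | k ∈ Γt q.1 q.2} = {q : 𝒳 × 𝒮 | T ≤ p k q.1 q.2} := by
      ext q
      rw [Set.mem_setOf_eq, hΓt q.1 q.2]
      rfl
    rw [h]
    exact measurableSet_le measurable_const (hpmeas k)
  have hmem : ∀ k, memEvent Γt k = {ω : 𝒳 × 𝒮 × Fin K | T ≤ p k ω.1 ω.2.1} := by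
    intro k
    ext ω
    rw [memEvent, Set.mem_setOf_eq, hΓt ω.1 ω.2.1]
    rfl
  have hatom : ∀ k : Fin K, μ {ω : 𝒳 × 𝒮 × Fin K | p k ω.1 ω.2.1 = T} = 0 :=
    fun k => atom_zero μ _ (hpm k) (hFkcont k) T
  have hthird : ∀ k : Fin K, (μ (memEvent Γt k)).toReal = 1 - Fk μ p k T := by
    intro k
    rw [hmem k]
    have h1 : {ω : 𝒳 × 𝒮 × Fin K | T ≤ p k ω.1 ω.2.1}
        = {ω : 𝒳 × 𝒮 × Fin K | p k ω.1 ω.2.1 < T}ᶜ := by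
      ext ω; simp [not_lt]
    have hm2 : MeasurableSet {ω : 𝒳 × 𝒮 × Fin K | p k ω.1 ω.2.1 < T} :=
      (hpm k) measurableSet_Iio
    have h2 : μ {ω : 𝒳 × 𝒮 × Fin K | p k ω.1 ω.2.1 ≤ T}
        = μ {ω : 𝒳 × 𝒮 × Fin K | p k ω.1 ω.2.1 < T} := by
      have hle2 : μ {ω : 𝒳 × 𝒮 × Fin K | p k ω.1 ω.2.1 < T}
          ≤ μ {ω : 𝒳 × 𝒮 × Fin K | p k ω.1 ω.2.1 ≤ T} := by
        refine measure_mono fun ω hω => ?_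
        simp only [Set.mem_setOf_eq] at hω ⊢
        exact le_of_lt hω
      refine le_antisymm ?_ hle2
      have hsub : {ω : 𝒳 × 𝒮 × Fin K | p k ω.1 ω.2.1 ≤ T}
          ⊆ {ω : 𝒳 × 𝒮 × Fin K | p k ω.1 ω.2.1 < T}
            ∪ {ω : 𝒳 × 𝒮 × Fin K | p k ω.1 ω.2.1 = T} := by
        intro ω hω
        simp only [Set.mem_setOf_eq, Set.mem_union] at hω ⊢
        exact lt_or_eq_of_le hω
      calc μ {ω : 𝒳 × 𝒮 × Fin K | p k ω.1 ω.2.1 ≤ T}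
          ≤ μ ({ω : 𝒳 × 𝒮 × Fin K | p k ω.1 ω.2.1 < T}
              ∪ {ω : 𝒳 × 𝒮 × Fin K | p k ω.1 ω.2.1 = T}) := measure_mono hsub
        _ ≤ μ {ω : 𝒳 × 𝒮 × Fin K | p k ω.1 ω.2.1 < T}
              + μ {ω : 𝒳 × 𝒮 × Fin K | p k ω.1 ω.2.1 = T} := measure_union_le _ _
        _ = μ {ω : 𝒳 × 𝒮 × Fin K | p k ω.1 ω.2.1 < T} := by rw [hatom k, add_zero]
    rw [h1, prob_compl_eq_one_sub hm2, ENNReal.toReal_sub_of_le prob_le_one ENNReal.one_ne_top,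
      ENNReal.toReal_one, ← h2]
    rfl
  have hsize : expSize μ Γt = β := by
    rw [expSize_eq_sum μ hΓtcl]
    calc ∑ k : Fin K, (μ (memEvent Γt k)).toReal
        = ∑ k : Fin K, (1 - Fk μ p k T) := Finset.sum_congr rfl fun k _ => hthird k
      _ = Gfun μ p T := rfl
      _ = β := hGT
  refine ⟨hsize, fun Γ hΓ hΓsize => ?_, hthird⟩
  rw [risk_eq_one_sub μ p hlink hΓtcl, risk_eq_one_sub μ p hlink hΓ]
  have key : ∀ k : Fin K, T * ((μ (memEvent Γt k)).toReal - (μ (memEvent Γ k)).toReal)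
      ≤ (∫ ω in memEvent Γt k, p k ω.1 ω.2.1 ∂μ) - ∫ ω in memEvent Γ k, p k ω.1 ω.2.1 ∂μ := by
    intro k
    rw [hmem k]
    exact key_ineq μ _ (hpm k) (fun ω => hp01 k ω.1 ω.2.1) T _ (memEvent_measurable hΓ k)
  have hsum : T * (expSize μ Γt - expSize μ Γ)
      ≤ (∑ k : Fin K, ∫ ω in memEvent Γt k, p k ω.1 ω.2.1 ∂μ)
        - ∑ k : Fin K, ∫ ω in memEvent Γ k, p k ω.1 ω.2.1 ∂μ := by
    rw [expSize_eq_sum μ hΓtcl, expSize_eq_sum μ hΓ, ← Finset.sum_sub_distrib,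
      ← Finset.sum_sub_distrib, Finset.mul_sum]
    exact Finset.sum_le_sum fun k _ => key k
  have h0 : 0 ≤ T * (expSize μ Γt - expSize μ Γ) := by
    refine mul_nonneg hT0 ?_
    rw [hsize]
    linarith
  linarith [hsum, h0]

end
end

section
/- Let N ≥ 1 be an integer and p ∈ (0,1], and let Z be a random variable with the Binomial(N,p) distribution. Then E[𝟙{Z > 0} / Z] ≤ 2 / ((N+1) p). -/
theorem statement16 (N : ℕ) (hN : 1 ≤ N) (p : ℝ) (hp0 : 0 < p) (hp1 : p ≤ 1) :
    ∑ j ∈ Finset.range (N + 1),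
        (N.choose j : ℝ) * p ^ j * (1 - p) ^ (N - j) * (if 0 < j then 1 / (j : ℝ) else 0)
      ≤ 2 / ((N + 1) * p) := by
  set q : ℝ := 1 - p with hq
  have hq0 : 0 ≤ q := by simp [hq]; linarith
  have hNp : (0:ℝ) < ((N:ℝ) + 1) * p := by positivity
  have key : ∀ j ∈ Finset.range (N + 1),
      (N.choose j : ℝ) * p ^ j * q ^ (N - j) * (if 0 < j then 1 / (j : ℝ) else 0)
      ≤ 2 / (((N:ℝ) + 1) * p) * (((N + 1).choose (j + 1) : ℝ) * p ^ (j + 1) * q ^ (N - j)) := by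
    intro j hj
    have hc : ((N:ℝ) + 1) * (N.choose j : ℝ) = ((N + 1).choose (j + 1) : ℝ) * ((j:ℝ) + 1) := by
      exact_mod_cast Nat.add_one_mul_choose_eq N j
    by_cases h0 : 0 < j
    · rw [if_pos h0]
      have hj1 : (1:ℝ) ≤ (j:ℝ) := by exact_mod_cast h0
      have hcc : ((N + 1).choose (j + 1) : ℝ)
          = ((N:ℝ) + 1) * (N.choose j : ℝ) / ((j:ℝ) + 1) := by
        field_simp [hc]
        linarith [hc]
      rw [hcc, pow_succ]
      have hA : (0:ℝ) ≤ (N.choose j : ℝ) * p ^ j * q ^ (N - j) := by positivity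
      have h2 : 1 / (j:ℝ) ≤ 2 / ((j:ℝ) + 1) := by
        rw [div_le_div_iff₀ (by linarith) (by linarith)]; linarith
      have : 2 / (((N:ℝ) + 1) * p) * (((N:ℝ) + 1) * (N.choose j : ℝ) / ((j:ℝ) + 1) * (p ^ j * p) * q ^ (N - j))
          = (N.choose j : ℝ) * p ^ j * q ^ (N - j) * (2 / ((j:ℝ) + 1)) := by
        field_simp
      rw [this]
      exact mul_le_mul_of_nonneg_left h2 hA
    · rw [if_neg h0]
      simp only [mul_zero]
      positivity
  refine le_trans (Finset.sum_le_sum key) ?_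
  rw [← Finset.mul_sum]
  have hsum : ∑ j ∈ Finset.range (N + 1), ((N + 1).choose (j + 1) : ℝ) * p ^ (j + 1) * q ^ (N - j) ≤ 1 := by
    have hbin : ∑ k ∈ Finset.range (N + 2), p ^ k * q ^ (N + 1 - k) * ((N + 1).choose k : ℝ)
        = 1 := by
      rw [← add_pow]
      simp [hq]
    rw [Finset.sum_range_succ'] at hbin
    have hrw : ∀ j ∈ Finset.range (N + 1),
        ((N + 1).choose (j + 1) : ℝ) * p ^ (j + 1) * q ^ (N - j)
        = p ^ (j + 1) * q ^ (N + 1 - (j + 1)) * ((N + 1).choose (j + 1) : ℝ) := by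
      intro j hj
      have : N + 1 - (j + 1) = N - j := by omega
      rw [this]; ring
    rw [Finset.sum_congr rfl hrw]
    simp only [pow_zero, Nat.choose_zero_right, Nat.cast_one, one_mul, mul_one, Nat.sub_zero] at hbin
    nlinarith [pow_nonneg hq0 (N + 1), hbin]
  calc 2 / (((N:ℝ) + 1) * p) * ∑ j ∈ Finset.range (N + 1), ((N + 1).choose (j + 1) : ℝ) * p ^ (j + 1) * q ^ (N - j)
      ≤ 2 / (((N:ℝ) + 1) * p) * 1 := by
        apply mul_le_mul_of_nonneg_left hsum; positivity
    _ = 2 / (((N:ℝ) + 1) * p) := by ring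
    _ = 2 / (((N:ℕ) + 1 : ℝ) * p) := by norm_num
end

section
/- Fix β ∈ (0,K). For every λ ∈ ℝ and γ ∈ ℝ^{[K]×𝒮}, the thresholding classifier Γ_{λ,γ}(x,s) := {k ∈ [K] : p_k(x,s) ≥ λ + γ_{k,s}/π_s} minimizes the Lagrangian risk over all set-valued classifiers: R_{λ,γ}(Γ_{λ,γ}) ≤ R_{λ,γ}(Γ) for every Γ ∈ 𝚪. -/
open MeasureTheory Set Filter

noncomputable section

set_option linter.unusedSectionVars false
namespace Statement18Aux

open MeasureTheory Set

variable {𝒳 𝒮 : Type*} [MeasurableSpace 𝒳] [MeasurableSpace 𝒮] [MeasurableSingletonClass 𝒮]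
  [Fintype 𝒮] {K : ℕ}

lemma measurable_proj : Measurable (fun ω : 𝒳 × 𝒮 × Fin K => (ω.1, ω.2.1)) :=
  measurable_fst.prodMk (measurable_fst.comp measurable_snd)

/-- pullback of a set of (x,s) pairs -/
def pb (A : Set (𝒳 × 𝒮)) : Set (𝒳 × 𝒮 × Fin K) := {ω | (ω.1, ω.2.1) ∈ A}

lemma meas_pb {A : Set (𝒳 × 𝒮)} (hA : MeasurableSet A) :
    MeasurableSet (pb (K := K) A) := measurable_proj hA

lemma meas_Ss (s : 𝒮) : MeasurableSet {ω : 𝒳 × 𝒮 × Fin K | ω.2.1 = s} :=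
  (measurable_fst.comp measurable_snd) (measurableSet_singleton s)

/-- the pointwise Lagrangian cost function -/
def gfun (μ : Measure (𝒳 × 𝒮 × Fin K)) (p : Fin K → 𝒳 → 𝒮 → ℝ) (lam : ℝ)
    (γ : Fin K → 𝒮 → ℝ) (k : Fin K) : 𝒳 × 𝒮 × Fin K → ℝ :=
  fun ω => lam + γ k ω.2.1 / probS μ ω.2.1 - p k ω.1 ω.2.1

def sPart (μ : Measure (𝒳 × 𝒮 × Fin K)) (γ : Fin K → 𝒮 → ℝ) (k : Fin K) :
    𝒳 × 𝒮 × Fin K → ℝ := fun ω => γ k ω.2.1 / probS μ ω.2.1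

lemma indicator_sPart (μ : Measure (𝒳 × 𝒮 × Fin K)) (γ : Fin K → 𝒮 → ℝ) (k : Fin K)
    (B : Set (𝒳 × 𝒮 × Fin K)) :
    B.indicator (sPart μ γ k) = fun ω => ∑ s : 𝒮,
      (B ∩ {ω' | ω'.2.1 = s}).indicator (fun _ => γ k s / probS μ s) ω := by
  funext ω
  rw [Finset.sum_eq_single ω.2.1]
  · by_cases hω : ω ∈ B <;> simp [Set.indicator_apply, hω, sPart]
  · intro s _ hs
    exact Set.indicator_of_notMem (fun h => hs (h.2.symm)) _
  · simp

lemma integrable_ind_sPart (μ : Measure (𝒳 × 𝒮 × Fin K)) [IsProbabilityMeasure μ]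
    (γ : Fin K → 𝒮 → ℝ) (k : Fin K) {B : Set (𝒳 × 𝒮 × Fin K)} (hB : MeasurableSet B) :
    Integrable (B.indicator (sPart μ γ k)) μ := by
  rw [indicator_sPart]
  exact integrable_finset_sum _ fun s _ =>
    (integrable_const _).indicator (hB.inter (meas_Ss s))

lemma integral_ind_sPart (μ : Measure (𝒳 × 𝒮 × Fin K)) [IsProbabilityMeasure μ]
    (γ : Fin K → 𝒮 → ℝ) (k : Fin K) {B : Set (𝒳 × 𝒮 × Fin K)} (hB : MeasurableSet B) :
    ∫ ω, B.indicator (sPart μ γ k) ω ∂μ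
      = ∑ s : 𝒮, (γ k s / probS μ s) * (μ (B ∩ {ω | ω.2.1 = s})).toReal := by
  rw [indicator_sPart, integral_finset_sum _
    (fun s _ => (integrable_const _).indicator (hB.inter (meas_Ss s)))]
  refine Finset.sum_congr rfl fun s _ => ?_
  rw [integral_indicator_const _ (hB.inter (meas_Ss s)), smul_eq_mul, mul_comm]
  rfl

lemma integrable_p (μ : Measure (𝒳 × 𝒮 × Fin K)) [IsProbabilityMeasure μ]
    (p : Fin K → 𝒳 → 𝒮 → ℝ) (hpmeas : ∀ k, Measurable fun q : 𝒳 × 𝒮 => p k q.1 q.2)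
    (hp01 : ∀ k x s, p k x s ∈ Icc (0:ℝ) 1) (k : Fin K) :
    Integrable (fun ω : 𝒳 × 𝒮 × Fin K => p k ω.1 ω.2.1) μ := by
  refine ⟨((hpmeas k).comp measurable_proj).aestronglyMeasurable, ?_⟩
  refine HasFiniteIntegral.of_bounded (C := 1) (Filter.Eventually.of_forall fun ω => ?_)
  have h := hp01 k ω.1 ω.2.1
  rw [Real.norm_eq_abs, abs_le]
  exact ⟨by linarith [h.1], h.2⟩

lemma indicator_g_split (μ : Measure (𝒳 × 𝒮 × Fin K)) (p : Fin K → 𝒳 → 𝒮 → ℝ)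
    (lam : ℝ) (γ : Fin K → 𝒮 → ℝ) (k : Fin K) (B : Set (𝒳 × 𝒮 × Fin K)) :
    B.indicator (gfun μ p lam γ k) = fun ω =>
      B.indicator (fun _ => lam) ω + B.indicator (sPart μ γ k) ω
        - B.indicator (fun ω => p k ω.1 ω.2.1) ω := by
  funext ω
  by_cases hω : ω ∈ B <;> simp [Set.indicator_apply, hω, gfun, sPart]

lemma integrable_ind_g (μ : Measure (𝒳 × 𝒮 × Fin K)) [IsProbabilityMeasure μ]
    (p : Fin K → 𝒳 → 𝒮 → ℝ) (hpmeas : ∀ k, Measurable fun q : 𝒳 × 𝒮 => p k q.1 q.2)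
    (hp01 : ∀ k x s, p k x s ∈ Icc (0:ℝ) 1) (lam : ℝ) (γ : Fin K → 𝒮 → ℝ) (k : Fin K)
    {B : Set (𝒳 × 𝒮 × Fin K)} (hB : MeasurableSet B) :
    Integrable (B.indicator (gfun μ p lam γ k)) μ := by
  rw [indicator_g_split]
  exact (((integrable_const lam).indicator hB).add
    (integrable_ind_sPart μ γ k hB)).sub ((integrable_p μ p hpmeas hp01 k).indicator hB)

lemma decomp (μ : Measure (𝒳 × 𝒮 × Fin K)) [IsProbabilityMeasure μ]
    (p : Fin K → 𝒳 → 𝒮 → ℝ) (hpmeas : ∀ k, Measurable fun q : 𝒳 × 𝒮 => p k q.1 q.2)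
    (hp01 : ∀ k x s, p k x s ∈ Icc (0:ℝ) 1) (lam : ℝ) (γ : Fin K → 𝒮 → ℝ) (k : Fin K)
    {B : Set (𝒳 × 𝒮 × Fin K)} (hB : MeasurableSet B) :
    ∫ ω, B.indicator (gfun μ p lam γ k) ω ∂μ
      = lam * (μ B).toReal
        + (∑ s : 𝒮, (γ k s / probS μ s) * (μ (B ∩ {ω | ω.2.1 = s})).toReal)
        - ∫ ω in B, p k ω.1 ω.2.1 ∂μ := by
  have h1 : Integrable (fun ω => B.indicator (fun _ => lam) ω + B.indicator (sPart μ γ k) ω) μ :=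
    ((integrable_const lam).indicator hB).add (integrable_ind_sPart μ γ k hB)
  have h2 : Integrable (fun ω : 𝒳 × 𝒮 × Fin K => B.indicator (fun ω => p k ω.1 ω.2.1) ω) μ :=
    (integrable_p μ p hpmeas hp01 k).indicator hB
  have h3 : Integrable (fun ω : 𝒳 × 𝒮 × Fin K => B.indicator (fun _ => lam) ω) μ :=
    (integrable_const lam).indicator hB
  have h4 : Integrable (fun ω : 𝒳 × 𝒮 × Fin K => B.indicator (sPart μ γ k) ω) μ :=
    integrable_ind_sPart μ γ k hB
  rw [indicator_g_split, integral_sub h1 h2, integral_add h3 h4,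
    integral_indicator_const _ hB, integral_ind_sPart μ γ k hB, integral_indicator hB,
    smul_eq_mul, mul_comm]
  rfl

lemma meas_Yk (k : Fin K) : MeasurableSet {ω : 𝒳 × 𝒮 × Fin K | ω.2.2 = k} :=
  (measurable_snd.comp measurable_snd) (measurableSet_singleton k)

lemma risk_eq (μ : Measure (𝒳 × 𝒮 × Fin K)) [IsProbabilityMeasure μ]
    (p : Fin K → 𝒳 → 𝒮 → ℝ)
    (hlink : ∀ (k : Fin K) (A : Set (𝒳 × 𝒮)), MeasurableSet A →
      (μ {ω | ω.2.2 = k ∧ (ω.1, ω.2.1) ∈ A}).toReal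
        = ∫ ω in {ω : 𝒳 × 𝒮 × Fin K | (ω.1, ω.2.1) ∈ A}, p k ω.1 ω.2.1 ∂μ)
    (Γ : 𝒳 → 𝒮 → Set (Fin K)) (hΓ : IsClassifier Γ) :
    risk μ Γ = 1 - ∑ k : Fin K,
      ∫ ω in pb {q : 𝒳 × 𝒮 | k ∈ Γ q.1 q.2}, p k ω.1 ω.2.1 ∂μ := by
  set E := {ω : 𝒳 × 𝒮 × Fin K | ω.2.2 ∈ Γ ω.1 ω.2.1} with hE
  have hEeq : E = ⋃ k : Fin K, ({ω | ω.2.2 = k} ∩ pb {q : 𝒳 × 𝒮 | k ∈ Γ q.1 q.2}) := by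
    ext ω
    simp only [hE, Set.mem_iUnion, Set.mem_inter_iff, Set.mem_setOf_eq, pb]
    constructor
    · exact fun h => ⟨ω.2.2, rfl, h⟩
    · rintro ⟨k, rfl, h⟩; exact h
  have hmeask : ∀ k : Fin K,
      MeasurableSet ({ω : 𝒳 × 𝒮 × Fin K | ω.2.2 = k} ∩ pb {q : 𝒳 × 𝒮 | k ∈ Γ q.1 q.2}) :=
    fun k => (meas_Yk k).inter (meas_pb (hΓ k))
  have hEmeas : MeasurableSet E := hEeq ▸ MeasurableSet.iUnion hmeask
  have hdisj : Pairwise (Function.onFun Disjoint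
      (fun k : Fin K => ({ω : 𝒳 × 𝒮 × Fin K | ω.2.2 = k} ∩ pb {q : 𝒳 × 𝒮 | k ∈ Γ q.1 q.2}))) := by
    intro i j hij
    refine Set.disjoint_left.mpr fun ω hi hj => hij ?_
    exact hi.1.symm.trans hj.1
  have hμE : (μ E).toReal = ∑ k : Fin K,
      ∫ ω in pb {q : 𝒳 × 𝒮 | k ∈ Γ q.1 q.2}, p k ω.1 ω.2.1 ∂μ := by
    rw [hEeq, measure_iUnion hdisj hmeask, tsum_fintype,
      ENNReal.toReal_sum (fun k _ => measure_ne_top μ _)]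
    refine Finset.sum_congr rfl fun k _ => ?_
    have := hlink k {q : 𝒳 × 𝒮 | k ∈ Γ q.1 q.2} (hΓ k)
    convert this using 2 <;> rfl
  have hcompl : {ω : 𝒳 × 𝒮 × Fin K | ω.2.2 ∉ Γ ω.1 ω.2.1} = Eᶜ := rfl
  rw [risk, hcompl, measure_compl hEmeas (measure_ne_top μ _), measure_univ,
    ENNReal.toReal_sub_of_le prob_le_one ENNReal.one_ne_top, ENNReal.toReal_one, hμE]

lemma ncard_eq (t : Set (Fin K)) :
    ((t.ncard : ℝ)) = ∑ k : Fin K, t.indicator (fun _ => (1:ℝ)) k := by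
  classical
  have h1 : t.ncard = (Finset.univ.filter (· ∈ t)).card := by
    rw [← Set.ncard_coe_finset]
    congr 1
    ext k; simp
  rw [h1, Finset.card_filter]
  push_cast
  refine Finset.sum_congr rfl fun k _ => ?_
  by_cases h : k ∈ t <;> simp [Set.indicator_apply, h]

lemma expSize_eq (μ : Measure (𝒳 × 𝒮 × Fin K)) [IsProbabilityMeasure μ]
    (Γ : 𝒳 → 𝒮 → Set (Fin K)) (hΓ : IsClassifier Γ) :
    expSize μ Γ = ∑ k : Fin K, (μ (pb {q : 𝒳 × 𝒮 | k ∈ Γ q.1 q.2})).toReal := by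
  have hfun : (fun ω : 𝒳 × 𝒮 × Fin K => ((Γ ω.1 ω.2.1).ncard : ℝ))
      = fun ω => ∑ k : Fin K,
        (pb {q : 𝒳 × 𝒮 | k ∈ Γ q.1 q.2}).indicator (fun _ => (1:ℝ)) ω := by
    funext ω
    rw [ncard_eq]
    refine Finset.sum_congr rfl fun k _ => ?_
    by_cases h : k ∈ Γ ω.1 ω.2.1 <;> simp [Set.indicator_apply, pb, h]
  rw [expSize, hfun, integral_finset_sum _
    (fun k _ => (integrable_const (1:ℝ)).indicator (meas_pb (hΓ k)))]
  refine Finset.sum_congr rfl fun k _ => ?_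
  rw [integral_indicator_const _ (meas_pb (hΓ k)), smul_eq_mul, mul_one]
  rfl

lemma lagRisk_eq (μ : Measure (𝒳 × 𝒮 × Fin K)) [IsProbabilityMeasure μ]
    (p : Fin K → 𝒳 → 𝒮 → ℝ) (hpmeas : ∀ k, Measurable fun q : 𝒳 × 𝒮 => p k q.1 q.2)
    (hp01 : ∀ k x s, p k x s ∈ Icc (0:ℝ) 1)
    (hlink : ∀ (k : Fin K) (A : Set (𝒳 × 𝒮)), MeasurableSet A →
      (μ {ω | ω.2.2 = k ∧ (ω.1, ω.2.1) ∈ A}).toReal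
        = ∫ ω in {ω : 𝒳 × 𝒮 × Fin K | (ω.1, ω.2.1) ∈ A}, p k ω.1 ω.2.1 ∂μ)
    (β lam : ℝ) (γ : Fin K → 𝒮 → ℝ)
    (Γ : 𝒳 → 𝒮 → Set (Fin K)) (hΓ : IsClassifier Γ) :
    lagRisk μ β lam γ Γ = (1 - lam * β) + ∑ k : Fin K,
      ∫ ω, (pb {q : 𝒳 × 𝒮 | k ∈ Γ q.1 q.2}).indicator (gfun μ p lam γ k) ω ∂μ := by
  have hdec : ∀ k : Fin K,
      ∫ ω, (pb {q : 𝒳 × 𝒮 | k ∈ Γ q.1 q.2}).indicator (gfun μ p lam γ k) ω ∂μ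
        = lam * (μ (pb {q : 𝒳 × 𝒮 | k ∈ Γ q.1 q.2})).toReal
          + (∑ s : 𝒮, (γ k s / probS μ s)
              * (μ (pb {q : 𝒳 × 𝒮 | k ∈ Γ q.1 q.2} ∩ {ω | ω.2.1 = s})).toReal)
          - ∫ ω in pb {q : 𝒳 × 𝒮 | k ∈ Γ q.1 q.2}, p k ω.1 ω.2.1 ∂μ :=
    fun k => decomp μ p hpmeas hp01 lam γ k (meas_pb (hΓ k))
  have hγ : ∀ k : Fin K, ∑ s : 𝒮, γ k s * condProb μ (memEvent Γ k) s
      = ∑ s : 𝒮, (γ k s / probS μ s)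
          * (μ (pb {q : 𝒳 × 𝒮 | k ∈ Γ q.1 q.2} ∩ {ω | ω.2.1 = s})).toReal := by
    intro k
    refine Finset.sum_congr rfl fun s _ => ?_
    rw [condProb]
    have : memEvent Γ k = pb {q : 𝒳 × 𝒮 | k ∈ Γ q.1 q.2} := rfl
    rw [this]; ring
  rw [lagRisk, risk_eq μ p hlink Γ hΓ, expSize_eq μ Γ hΓ]
  simp_rw [hdec, hγ]
  rw [Finset.sum_sub_distrib, Finset.sum_add_distrib, ← Finset.mul_sum]
  ring

end Statement18Aux

theorem statement18
    {𝒳 𝒮 : Type*} [MeasurableSpace 𝒳] [MeasurableSpace 𝒮] [MeasurableSingletonClass 𝒮]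
    [Fintype 𝒮] [Nonempty 𝒮] {K : ℕ} (hK : 2 ≤ K)
    (μ : Measure (𝒳 × 𝒮 × Fin K)) (hμ : IsProbabilityMeasure μ)
    (hπ : ∀ s : 𝒮, 0 < probS μ s)
    (p : Fin K → 𝒳 → 𝒮 → ℝ)
    (hpmeas : ∀ k, Measurable fun q : 𝒳 × 𝒮 => p k q.1 q.2)
    (hp01 : ∀ k x s, p k x s ∈ Icc (0:ℝ) 1)
    (hpsum : ∀ x s, ∑ k : Fin K, p k x s = 1)
    (hlink : ∀ (k : Fin K) (A : Set (𝒳 × 𝒮)), MeasurableSet A →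
      (μ {ω | ω.2.2 = k ∧ (ω.1, ω.2.1) ∈ A}).toReal
        = ∫ ω in {ω : 𝒳 × 𝒮 × Fin K | (ω.1, ω.2.1) ∈ A}, p k ω.1 ω.2.1 ∂μ)
    (β : ℝ) (hβ0 : 0 < β) (hβK : β < (K : ℝ))
    (lam : ℝ) (γ : Fin K → 𝒮 → ℝ) :
    ∀ Γ : 𝒳 → 𝒮 → Set (Fin K), IsClassifier Γ →
      lagRisk μ β lam γ (oracle μ p lam γ) ≤ lagRisk μ β lam γ Γ := by
  open Statement18Aux in
  intro Γ hΓ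
  have horacle : IsClassifier (oracle μ p lam γ) := by
    intro k
    have hf : Measurable (fun q : 𝒳 × 𝒮 => lam + γ k q.2 / probS μ q.2) :=
      measurable_const.add ((measurable_of_countable
        (fun s : 𝒮 => γ k s / probS μ s)).comp measurable_snd)
    exact measurableSet_le hf (hpmeas k)
  rw [lagRisk_eq μ p hpmeas hp01 hlink β lam γ Γ hΓ,
    lagRisk_eq μ p hpmeas hp01 hlink β lam γ _ horacle]
  refine add_le_add_right (Finset.sum_le_sum fun k _ => ?_) _
  refine integral_mono
    (integrable_ind_g μ p hpmeas hp01 lam γ k (meas_pb (horacle k)))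
    (integrable_ind_g μ p hpmeas hp01 lam γ k (meas_pb (hΓ k))) fun ω => ?_
  have hOiff : ω ∈ pb {q : 𝒳 × 𝒮 | k ∈ oracle μ p lam γ q.1 q.2}
      ↔ gfun μ p lam γ k ω ≤ 0 := by
    simp [pb, oracle, gfun, sub_nonpos]
  by_cases hO : ω ∈ pb {q : 𝒳 × 𝒮 | k ∈ oracle μ p lam γ q.1 q.2}
  · rw [Set.indicator_of_mem hO]
    by_cases hA : ω ∈ pb {q : 𝒳 × 𝒮 | k ∈ Γ q.1 q.2}
    · rw [Set.indicator_of_mem hA]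
    · rw [Set.indicator_of_notMem hA]
      exact hOiff.mp hO
  · rw [Set.indicator_of_notMem hO]
    by_cases hA : ω ∈ pb {q : 𝒳 × 𝒮 | k ∈ Γ q.1 q.2}
    · rw [Set.indicator_of_mem hA]
      exact le_of_lt (not_le.mp (fun h => hO (hOiff.mpr h)))
    · rw [Set.indicator_of_notMem hA]

end
end
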